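/- arXiv:2210.13137 — 9 statements merged into one kernel-verified Lean document; each statement's English description precedes it below -/
import Mathlib

section
/- Let q, r be natural numbers and a : Fin (q+1) → (Fin r → ℤ) a family of integer weight vectors. Let T = (Fin r → ℂˣ) act diagonally on ℂ^{q+1} = (Fin (q+1) → ℂ) by (t • z) j = (∏ i, (t i : ℂ) ^ (−(a j i))) * z j, and let μ(z) i = (∑ j, ‖z j‖² * (a j i)) / (∑ j, ‖z j‖²) for z ≠ 0. Let 𝟙 ∈ ℂ^{q+1} be the all-ones vector and let W̃ ⊆ ℂ^{q+1} be the closure, in the Euclidean topology, of the set { c • (t • 𝟙) : c ∈ ℂˣ, t ∈ T } (the affine cone over the projective toric variety W ⊂ ℙ^q obtained as the orbit closure of [1 : ⋯ : 1]). Then the image μ(W̃ \ {0}) equals the convex hull over ℝ of the finite set { (fun i => (a j i : ℝ)) : j ∈ Fin (q+1) }, i.e., the moment image of the (possibly non-normal) projective toric variety W is the polytope Δ_W(O(1)) associated with W. -/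
/-!
Fix `p` in the polytope and put `b j = a j - p`. For `y ∈ ℝ^r`, the torus point with
`|t i| = exp (-y i / 2)` has moment image `expMean a y`, the mean of the weights `a j` with
weights `exp ⟪y, a j⟫`, and `expMean b = expMean a - p`. Because `0` lies in the convex hull of
the `b j`, some `⟪y, b j⟫` is nonnegative, so `expSum b ≥ 1` everywhere. On the other hand
`expMean b` is the gradient of `log ∘ expSum b`, and a gradient step multiplies `expSum b` by at
most `1 - ‖expMean b‖² / (4R²)`. Hence `expMean b` gets arbitrarily small, i.e. the moment images
of torus points are dense in the polytope. Rescaling to the sphere `∑ ‖z j‖² = 1`, they lie in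
the image of a compact subset of `W̃ \ {0}`, which is closed and so contains the polytope.
-/

open Finset Set
open scoped RealInnerProductSpace Pointwise

section ExpMean

variable {ι E : Type*} [Fintype ι] [NormedAddCommGroup E] [InnerProductSpace ℝ E]

noncomputable def expSum (v : ι → E) (y : E) : ℝ := ∑ j, Real.exp ⟪y, v j⟫

noncomputable def expMean (v : ι → E) (y : E) : E :=
  univ.centerMass (fun j => Real.exp ⟪y, v j⟫) v

variable (v : ι → E) (y : E)

lemma expSum_pos [Nonempty ι] : 0 < expSum v y :=
  sum_pos (fun _ _ => Real.exp_pos _) univ_nonempty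

lemma expSum_zero : expSum v 0 = Fintype.card ι := by
  simp [expSum]

lemma one_le_expSum {j : ι} (hj : 0 ≤ ⟪y, v j⟫) : 1 ≤ expSum v y :=
  (Real.one_le_exp hj).trans <|
    single_le_sum (f := fun j => Real.exp ⟪y, v j⟫) (fun _ _ => (Real.exp_pos _).le) (mem_univ j)

lemma sum_exp_mul_inner_eq [Nonempty ι] (x : E) :
    ∑ j, Real.exp ⟪y, v j⟫ * ⟪x, v j⟫ = expSum v y * ⟪x, expMean v y⟫ := by
  rw [expMean, centerMass, inner_smul_right, inner_sum, ← expSum, mul_inv_cancel_left₀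
    (expSum_pos v y).ne']
  simp only [inner_smul_right]

lemma norm_expMean_le [Nonempty ι] {R : ℝ} (hR : ∀ j, ‖v j‖ ≤ R) : ‖expMean v y‖ ≤ R := by
  have hball : convexHull ℝ (range v) ⊆ Metric.closedBall 0 R :=
    convexHull_min (range_subset_iff.2 fun j => mem_closedBall_zero_iff.2 (hR j))
      (convex_closedBall 0 R)
  exact mem_closedBall_zero_iff.1 <| hball <| univ.centerMass_mem_convexHull
    (fun _ _ => (Real.exp_pos _).le) (expSum_pos v y) fun j _ => mem_range_self j

lemma expSum_sub_smul_expMean_le [Nonempty ι] {R : ℝ} (hR0 : 0 < R) (hR : ∀ j, ‖v j‖ ≤ R) :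
    expSum v (y - (2 * R ^ 2)⁻¹ • expMean v y)
      ≤ expSum v y * (1 - ‖expMean v y‖ ^ 2 / (4 * R ^ 2)) := by
  set m := expMean v y
  set s := (2 * R ^ 2)⁻¹
  have hm : ‖m‖ ≤ R := norm_expMean_le v y hR
  have hterm : ∀ j, Real.exp ⟪y - s • m, v j⟫ ≤ Real.exp ⟪y, v j⟫ * (1 + s ^ 2 * (‖m‖ ^ 2 * R ^ 2))
      - s * (Real.exp ⟪y, v j⟫ * ⟪m, v j⟫) := by
    intro j
    have hCS : |⟪m, v j⟫| ≤ ‖m‖ * R :=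
      (abs_real_inner_le_norm m (v j)).trans (mul_le_mul_of_nonneg_left (hR j) (norm_nonneg m))
    have hsq : ⟪m, v j⟫ ^ 2 ≤ ‖m‖ ^ 2 * R ^ 2 := by
      rw [← mul_pow, ← sq_abs]; exact pow_le_pow_left₀ (abs_nonneg _) hCS 2
    have hsmall : |-(s * ⟪m, v j⟫)| ≤ 1 := by
      rw [abs_neg, abs_mul, abs_of_pos (by positivity : 0 < s)]
      calc s * |⟪m, v j⟫| ≤ s * (R * R) := by gcongr; nlinarith [norm_nonneg m]
        _ ≤ 1 := by rw [show s * (R * R) = 1 / 2 by simp only [s]; field_simp]; norm_num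
    have hexp : Real.exp (-(s * ⟪m, v j⟫)) ≤ 1 + s ^ 2 * (‖m‖ ^ 2 * R ^ 2) - s * ⟪m, v j⟫ := by
      have := (abs_le.mp (Real.abs_exp_sub_one_sub_id_le hsmall)).2
      nlinarith [mul_le_mul_of_nonneg_left hsq (sq_nonneg s)]
    rw [inner_sub_left, real_inner_smul_left, sub_eq_add_neg, Real.exp_add]
    nlinarith [mul_le_mul_of_nonneg_left hexp (Real.exp_pos ⟪y, v j⟫).le]
  calc expSum v (y - s • m) ≤ ∑ j, (Real.exp ⟪y, v j⟫ * (1 + s ^ 2 * (‖m‖ ^ 2 * R ^ 2))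
        - s * (Real.exp ⟪y, v j⟫ * ⟪m, v j⟫)) := sum_le_sum fun j _ => hterm j
    _ = expSum v y * (1 + s ^ 2 * (‖m‖ ^ 2 * R ^ 2)) - s * (expSum v y * ‖m‖ ^ 2) := by
      rw [sum_sub_distrib, ← sum_mul, ← mul_sum, sum_exp_mul_inner_eq, real_inner_self_eq_norm_sq,
        expSum]
    _ = expSum v y * (1 - ‖m‖ ^ 2 / (4 * R ^ 2)) := by
      simp only [s]; field_simp; ring

lemma exists_expSum_le_geometric [Nonempty ι] {R ε : ℝ} (hR0 : 0 < R) (hR : ∀ j, ‖v j‖ ≤ R)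
    (hε : 0 ≤ ε) (hfar : ∀ y, ε ≤ ‖expMean v y‖) (n : ℕ) :
    ∃ y, expSum v y ≤ Fintype.card ι * (1 - ε ^ 2 / (4 * R ^ 2)) ^ n := by
  set ρ := 1 - ε ^ 2 / (4 * R ^ 2)
  have hρ : 0 ≤ ρ := by
    have hεR : ε ≤ R := (hfar 0).trans (norm_expMean_le v 0 hR)
    have : ε ^ 2 / (4 * R ^ 2) ≤ 1 := by rw [div_le_one (by positivity)]; nlinarith
    linarith
  induction n with
  | zero => exact ⟨0, by simp [expSum_zero]⟩
  | succ n ih =>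
    obtain ⟨y, hy⟩ := ih
    refine ⟨y - (2 * R ^ 2)⁻¹ • expMean v y, ?_⟩
    have hstep : 1 - ‖expMean v y‖ ^ 2 / (4 * R ^ 2) ≤ ρ := by
      have := pow_le_pow_left₀ hε (hfar y) 2
      simp only [ρ]; gcongr
    calc _ ≤ expSum v y * (1 - ‖expMean v y‖ ^ 2 / (4 * R ^ 2)) :=
          expSum_sub_smul_expMean_le v y hR0 hR
      _ ≤ expSum v y * ρ := by gcongr; exact (expSum_pos v y).le
      _ ≤ Fintype.card ι * ρ ^ n * ρ := by gcongr
      _ = Fintype.card ι * ρ ^ (n + 1) := by ring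

lemma exists_norm_expMean_lt [Nonempty ι] (hv : ∀ y, ∃ j, 0 ≤ ⟪y, v j⟫) {ε : ℝ} (hε : 0 < ε) :
    ∃ y, ‖expMean v y‖ < ε := by
  by_contra! hfar
  obtain ⟨j₀, hj₀⟩ := Finite.exists_max fun j => ‖v j‖
  set R := ‖v j₀‖ + 1
  have hR : ∀ j, ‖v j‖ ≤ R := fun j => (hj₀ j).trans (le_add_of_nonneg_right zero_le_one)
  have hρ : 1 - ε ^ 2 / (4 * R ^ 2) < 1 := sub_lt_self 1 (by positivity)
  have hcard : (0 : ℝ) < Fintype.card ι := by exact_mod_cast Fintype.card_pos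
  obtain ⟨n, hn⟩ := exists_pow_lt_of_lt_one (inv_pos.2 hcard) hρ
  obtain ⟨y, hy⟩ := exists_expSum_le_geometric v (by positivity) hR hε.le hfar n
  obtain ⟨j, hj⟩ := hv y
  have := one_le_expSum v y hj
  have := mul_lt_mul_of_pos_left hn hcard
  rw [mul_inv_cancel₀ hcard.ne'] at this
  linarith

omit [Fintype ι] in
lemma exists_inner_nonneg_of_zero_mem_convexHull (h : (0 : E) ∈ convexHull ℝ (range v)) :
    ∃ j, 0 ≤ ⟪y, v j⟫ := by
  by_contra! hneg
  have := convexHull_min (range_subset_iff.2 hneg) (convex_halfSpace_lt (innerₛₗ ℝ y).isLinear 0) h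
  simp at this

lemma expMean_sub_const [Nonempty ι] (p : E) : expMean (fun j => v j - p) y = expMean v y - p := by
  have hw : (fun j => Real.exp ⟪y, v j - p⟫) = Real.exp (-⟪y, p⟫) • fun j => Real.exp ⟪y, v j⟫ := by
    ext j
    rw [Pi.smul_apply, smul_eq_mul, inner_sub_right, ← Real.exp_add, neg_add_eq_sub]
  rw [expMean, hw, centerMass_smul_left (hc := (Real.exp_pos _).ne')]
  have hG : ∑ j, Real.exp ⟪y, v j⟫ ≠ 0 := (expSum_pos v y).ne'
  simp only [expMean, centerMass, smul_sub, sum_sub_distrib, ← sum_smul, smul_smul,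
    inv_mul_cancel₀ hG, one_smul]

theorem convexHull_subset_closure_range_expMean [Nonempty ι] :
    convexHull ℝ (range v) ⊆ closure (range (expMean v)) := by
  intro p hp
  have h0 : (0 : E) ∈ convexHull ℝ (range fun j => v j - p) := by
    have htrans : range (fun j => v j - p) = -p +ᵥ range v := by
      rw [← Set.image_vadd, ← range_comp]; simp [Function.comp_def, neg_add_eq_sub]
    rw [htrans, convexHull_vadd]
    simpa using vadd_mem_vadd_set (a := -p) hp
  rw [Metric.mem_closure_range_iff]
  intro ε hε
  obtain ⟨y, hy⟩ := exists_norm_expMean_lt _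
    (fun y => exists_inner_nonneg_of_zero_mem_convexHull _ y h0) hε
  refine ⟨y, ?_⟩
  rwa [dist_comm, dist_eq_norm, ← expMean_sub_const]

end ExpMean

section ToricMomentMap

variable {ι κ : Type*} [Fintype ι]

noncomputable def moment (a : ι → κ → ℤ) (z : ι → ℂ) : κ → ℝ :=
  fun i => (∑ j, ‖z j‖ ^ 2 * (a j i : ℝ)) / (∑ j, ‖z j‖ ^ 2)

def orbitCone [Fintype κ] (a : ι → κ → ℤ) : Set (ι → ℂ) :=
  {z | ∃ (c : ℂˣ) (t : κ → ℂˣ), z = fun j => (c : ℂ) * ((∏ i, (t i : ℂ) ^ (-(a j i))) * 1)}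

variable (a : ι → κ → ℤ)

lemma moment_eq_centerMass (z : ι → ℂ) :
    moment a z = univ.centerMass (fun j => ‖z j‖ ^ 2) (fun j i => (a j i : ℝ)) := by
  ext i
  simp [moment, centerMass, div_eq_inv_mul]

lemma moment_mem_convexHull {z : ι → ℂ} (hz : z ≠ 0) :
    moment a z ∈ convexHull ℝ (range fun j i => (a j i : ℝ)) := by
  obtain ⟨j, hj⟩ := Function.ne_iff.1 hz
  rw [moment_eq_centerMass]
  exact univ.centerMass_mem_convexHull (fun _ _ => by positivity)
    (sum_pos' (fun _ _ => by positivity) ⟨j, mem_univ j, pow_pos (norm_pos_iff.2 hj) 2⟩)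
    fun j _ => mem_range_self j

lemma isCompact_sum_norm_sq_eq_one : IsCompact {z : ι → ℂ | ∑ j, ‖z j‖ ^ 2 = 1} := by
  refine Metric.isCompact_of_isClosed_isBounded (isClosed_eq (by fun_prop) continuous_const)
    ((Metric.isBounded_closedBall (x := 0) (r := 1)).subset fun z hz => ?_)
  refine mem_closedBall_zero_iff.2 ((pi_norm_le_iff_of_nonneg zero_le_one).2 fun j => ?_)
  have : ‖z j‖ ^ 2 ≤ 1 :=
    hz.out ▸ single_le_sum (f := fun j => ‖z j‖ ^ 2) (fun _ _ => by positivity) (mem_univ j)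
  nlinarith [norm_nonneg (z j)]

lemma continuousOn_moment : ContinuousOn (moment a) {z | ∑ j, ‖z j‖ ^ 2 = 1} :=
  continuousOn_pi.2 fun i => ContinuousOn.div (by fun_prop) (by fun_prop)
    fun z hz => hz.out ▸ one_ne_zero

lemma norm_sq_exp_mul_prod_exp_zpow [Fintype κ] (s : ℝ) (y : κ → ℝ) (n : κ → ℤ) :
    ‖Complex.exp s * ((∏ i, Complex.exp (y i) ^ n i) * 1)‖ ^ 2
      = Real.exp (2 * (s + ∑ i, n i * y i)) := by
  simp only [mul_one, ← Complex.exp_int_mul, ← Complex.exp_sum, ← Complex.exp_add, Complex.norm_exp]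
  rw [← Real.exp_nat_mul]
  simp

lemma exists_mem_orbitCone_moment_eq [Fintype κ] [Nonempty ι] (y : EuclideanSpace ℝ κ) :
    ∃ z ∈ orbitCone a, ∑ j, ‖z j‖ ^ 2 = 1 ∧
      moment a z = (expMean (fun j => WithLp.toLp 2 fun i => (a j i : ℝ)) y).ofLp := by
  set v := fun j => WithLp.toLp 2 fun i => (a j i : ℝ)
  set G := expSum v y
  have hG := expSum_pos v y
  let c : ℂˣ := Units.mk0 (Complex.exp ↑(-(Real.log G / 2))) (Complex.exp_ne_zero _)
  let t : κ → ℂˣ := fun i => Units.mk0 (Complex.exp ↑(-(y i / 2))) (Complex.exp_ne_zero _)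
  refine ⟨_, ⟨c, t, rfl⟩, ?_⟩
  have hnorm : ∀ j, ‖(c : ℂ) * ((∏ i, (t i : ℂ) ^ (-(a j i))) * 1)‖ ^ 2
      = G⁻¹ * Real.exp ⟪y, v j⟫ := by
    intro j
    simp only [c, t, Units.val_mk0]
    have hexponent : 2 * (-(Real.log G / 2) + ∑ i, ((-a j i : ℤ) : ℝ) * -(y i / 2))
        = ⟪y, v j⟫ - Real.log G := by
      simp only [v, PiLp.inner_apply, RCLike.inner_apply, conj_trivial, Int.cast_neg, neg_mul_neg,
        mul_add, mul_sum]
      ring_nf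
    rw [norm_sq_exp_mul_prod_exp_zpow, hexponent, Real.exp_sub, Real.exp_log hG, div_eq_inv_mul]
  simp only [hnorm, ← mul_sum]
  refine ⟨inv_mul_cancel₀ hG.ne', ?_⟩
  rw [moment_eq_centerMass]
  simp only [hnorm]
  rw [show (fun j => G⁻¹ * Real.exp ⟪y, v j⟫) = G⁻¹ • fun j => Real.exp ⟪y, v j⟫ from rfl,
    centerMass_smul_left (hc := inv_ne_zero hG.ne')]
  simp [expMean, centerMass, v]

lemma convexHull_subset_closure_range_ofLp_expMean [Fintype κ] [Nonempty ι] (u : ι → κ → ℝ) :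
    convexHull ℝ (range u) ⊆ closure (range fun y : EuclideanSpace ℝ κ =>
      (expMean (fun j => WithLp.toLp 2 (u j)) y).ofLp) := by
  intro p hp
  have hpLp : WithLp.toLp 2 p ∈ convexHull ℝ (range fun j => WithLp.toLp 2 (u j)) := by
    have := (WithLp.linearEquiv 2 ℝ (κ → ℝ)).symm.toLinearMap.image_convexHull (range u)
    rw [← range_comp] at this
    exact this ▸ mem_image_of_mem _ hp
  exact map_mem_closure (PiLp.continuous_ofLp 2 _) (convexHull_subset_closure_range_expMean _ hpLp)
    (range_subset_iff.2 fun y => mem_range_self y)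

end ToricMomentMap

/-- **Moment image of a (possibly non-normal) projective toric variety is the
polytope `Δ_W(O(1))`.**

The torus `T = (Fin r → ℂˣ)` acts on `ℂ^{q+1}` by
`(t • z) j = (∏ i, (t i) ^ (-(a j i))) * z j`, and `W̃` is the Euclidean closure
of the set `{ c • (t • 𝟙) : c ∈ ℂˣ, t ∈ T }` (the affine cone over the orbit
closure of `[1 : ⋯ : 1]` in `ℙ^q`).  The moment map
`μ z i = (∑ j, ‖z j‖² * a j i) / (∑ j, ‖z j‖²)` sends `W̃ \ {0}` onto the convex
hull of the weight vectors `a j`. -/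
theorem moment_image_eq_polytope (q r : ℕ) (a : Fin (q + 1) → Fin r → ℤ) :
    (fun z : Fin (q + 1) → ℂ => fun i : Fin r =>
        (∑ j, ‖z j‖ ^ 2 * (a j i : ℝ)) / (∑ j, ‖z j‖ ^ 2)) ''
      (closure {z : Fin (q + 1) → ℂ | ∃ (c : ℂˣ) (t : Fin r → ℂˣ),
          z = fun j => (c : ℂ) * ((∏ i, (t i : ℂ) ^ (-(a j i))) * 1)} \ {0})
      = convexHull ℝ (Set.range fun j : Fin (q + 1) => fun i : Fin r => (a j i : ℝ)) := by
  change moment a '' (closure (orbitCone a) \ {0}) = _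
  refine Subset.antisymm (image_subset_iff.2 fun z hz => moment_mem_convexHull a hz.2) ?_
  set K := closure (orbitCone a) ∩ {z | ∑ j, ‖z j‖ ^ 2 = 1}
  have hK : IsCompact K := isCompact_sum_norm_sq_eq_one.inter_left isClosed_closure
  calc convexHull ℝ (range fun j i => (a j i : ℝ))
      ⊆ closure (range fun y : EuclideanSpace ℝ (Fin r) =>
          (expMean (fun j => WithLp.toLp 2 fun i => (a j i : ℝ)) y).ofLp) :=
        convexHull_subset_closure_range_ofLp_expMean _
    _ ⊆ closure (moment a '' K) := closure_mono <| range_subset_iff.2 fun y => by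
        obtain ⟨z, hzS, hz1, hz⟩ := exists_mem_orbitCone_moment_eq a y
        exact ⟨z, ⟨subset_closure hzS, hz1⟩, hz⟩
    _ ⊆ moment a '' K := (hK.image_of_continuousOn
        ((continuousOn_moment a).mono inter_subset_right)).isClosed.closure_subset
    _ ⊆ moment a '' (closure (orbitCone a) \ {0}) := image_mono fun z hz =>
        ⟨hz.1, fun h0 => by simpa [mem_singleton_iff.1 h0] using hz.2⟩
end

section
/- Let q, r, the torus action with weights a : Fin (q+1) → (Fin r → ℤ), the moment map μ, the all-ones vector 𝟙, and the affine cone W̃ = closure{ c • (t • 𝟙) : c ∈ ℂˣ, t ∈ T } be as in the context. Let S be the additive submonoid of ℤ × (Fin r → ℤ) generated by the elements (1, a j) for j ∈ Fin (q+1). Then a point x ∈ (Fin r → ℝ) all of whose coordinates are rational lies in μ(W̃ \ {0}) if and only if there exist n > 0 and b : Fin r → ℤ with (n, b) ∈ S and x i = (b i : ℝ) / n for every i. (This is the statement μ(W) ∩ ℚ^r = Δ_ℚ(S) of the convexity proposition.) -/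
/-!
`μ z` is the barycentre of the weights `a j` with masses `‖z j‖²`, so `μ(W̃ \ {0})` lies in the
convex hull of the weights. Conversely, let `x` be the barycentre for strictly positive masses `w`.
Every vector `y` in the range of `s ↦ (⟪a j - x, s⟫)ⱼ` satisfies `∑ j, w j * y j = 0`, so on that
range the sublevel sets of `y ↦ ∑ j, exp (y j)` are bounded. Hence `s ↦ ∑ j, exp ⟪a j - x, s⟫`
attains its minimum, and the vanishing of its gradient says that the torus point
`z j = exp (⟪a j, s⟫ / 2)` has `μ z = x`. Since `W̃` meets the unit sphere in a compact
set, the closure of these barycentres, i.e. the whole convex hull, lies in `μ(W̃ \ {0})`.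

A rational point of the real convex hull of integral points is a rational convex combination of
them: Carathéodory gives affinely independent points with unique positive weights, and a rational
linear system solvable over `ℝ` is solvable over `ℚ`. Clearing denominators turns such a
combination into an element `(n, b)` of `S`.
-/

open Finset Set Matrix

theorem mem_convexHull_range_iff {R E ι : Type*} [Field R] [LinearOrder R] [IsStrictOrderedRing R]
    [AddCommGroup E] [Module R E] [Fintype ι] {v : ι → E} {x : E} :
    x ∈ convexHull R (range v) ↔
      ∃ w : ι → R, (∀ i, 0 ≤ w i) ∧ ∑ i, w i = 1 ∧ ∑ i, w i • v i = x := by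
  classical
  refine ⟨fun hx => ?_, fun ⟨w, hw₀, hw₁, hx⟩ =>
    mem_convexHull_of_exists_fintype w v hw₀ hw₁ mem_range_self hx⟩
  have hv : range v = Fintype.linearCombination R v '' range fun i => Pi.single i 1 := by
    rw [← range_comp]
    simp [Function.comp_def]
  rw [hv, ← LinearMap.image_convexHull, convexHull_rangle_single_eq_stdSimplex] at hx
  obtain ⟨w, ⟨hw₀, hw₁⟩, rfl⟩ := hx
  exact ⟨w, hw₀, hw₁, rfl⟩

theorem Finset.centerMass_eq_of_sum_smul_sub_eq_zero {ι E : Type*} [AddCommGroup E] [Module ℝ E]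
    {t : Finset ι} {w : ι → ℝ} {z : ι → E} {x : E} (hw : ∑ i ∈ t, w i ≠ 0)
    (h : ∑ i ∈ t, w i • (z i - x) = 0) : t.centerMass w z = x := by
  rw [centerMass, inv_smul_eq_iff₀ hw, sum_smul, ← sub_eq_zero, ← sum_sub_distrib, ← h]
  simp [smul_sub]

theorem convexHull_range_subset_closure_pos_combinations {ι E : Type*} [Fintype ι] [AddCommGroup E]
    [Module ℝ E] [TopologicalSpace E] [ContinuousAdd E] [ContinuousSMul ℝ E] (v : ι → E) :
    convexHull ℝ (range v) ⊆
      closure {x | ∃ w : ι → ℝ, (∀ i, 0 < w i) ∧ ∑ i, w i = 1 ∧ ∑ i, w i • v i = x} := by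
  intro x hx
  obtain ⟨w, hw₀, hw₁, rfl⟩ := mem_convexHull_range_iff.1 hx
  have hcard : 0 < (Fintype.card ι : ℝ) := by
    by_contra h
    simp_all [Fintype.card_eq_zero_iff]
  set c := ∑ i, (Fintype.card ι : ℝ)⁻¹ • v i
  -- the open segment from the centroid `c` to `x` consists of positive combinations
  refine closure_mono ?_ (segment_subset_closure_openSegment (right_mem_segment ℝ c _))
  rintro _ ⟨α, β, hα, hβ, hαβ, rfl⟩
  refine ⟨fun i => α * (Fintype.card ι : ℝ)⁻¹ + β * w i,
    fun i => add_pos_of_pos_of_nonneg (by positivity) (mul_nonneg hβ.le (hw₀ i)), ?_, ?_⟩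
  · simp only [sum_add_distrib, ← mul_sum, hw₁, sum_const, card_univ, nsmul_eq_mul]
    field_simp
    linarith
  · simp [c, add_smul, sum_add_distrib, smul_sum, smul_smul]

theorem exists_rat_combination_of_real {ι κ : Type*} [Fintype ι] [Fintype κ]
    (p : ι → κ → ℚ) (y : κ → ℚ) (w : ι → ℝ) (h : ∀ k, ∑ i, w i * p i k = y k) :
    ∃ u : ι → ℚ, ∀ k, ∑ i, u i * p i k = y k := by
  classical
  set A : Matrix κ ι ℚ := Matrix.of fun k i => p i k
  by_contra hno
  have hy : y ∉ LinearMap.range A.mulVecLin := by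
    rintro ⟨u, hu⟩
    exact hno ⟨u, fun k => by simp [← hu, A, mulVec, dotProduct, mul_comm]⟩
  -- a rational functional killing the columns of `A` but not `y` is absurd: over `ℝ`, `y = A w`
  obtain ⟨φ, hφy, hφA⟩ := Submodule.exists_dual_map_eq_bot_of_notMem hy inferInstance
  set c : κ → ℚ := fun k => φ fun j => if k = j then 1 else 0
  have hφ : ∀ v, φ v = ∑ k, v k * c k := fun v => by
    simp [c, LinearMap.pi_apply_eq_sum_univ φ v]
  have hc : ∀ i, ∑ k, p i k * c k = 0 := fun i => by
    have : φ (A *ᵥ Pi.single i 1) = 0 :=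
      (Submodule.mem_bot ℚ).1 (hφA ▸ Submodule.mem_map_of_mem (LinearMap.mem_range_self _ _))
    simpa [hφ, A] using this
  have hyc : ((∑ k, y k * c k : ℚ) : ℝ) = 0 :=
    calc ((∑ k, y k * c k : ℚ) : ℝ) = ∑ i, w i * ((∑ k, p i k * c k : ℚ) : ℝ) := by
          push_cast
          simp_rw [← h, sum_mul, mul_sum, mul_assoc]
          exact sum_comm
      _ = 0 := by simp [hc]
  exact hφy ((hφ y).trans (by exact_mod_cast hyc))

theorem ratCast_mem_convexHull_iff {ι κ : Type*} [Fintype ι] [Fintype κ] {p : ι → κ → ℚ}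
    {y : κ → ℚ} :
    (fun k => (y k : ℝ)) ∈ convexHull ℝ (range fun i k => (p i k : ℝ)) ↔
      y ∈ convexHull ℚ (range p) := by
  refine ⟨fun h => ?_, fun h => ?_⟩
  · obtain ⟨ι', _, z, w, hz, hz_indep, hw₀, hw₁, hwz⟩ := eq_pos_convex_span_of_mem_convexHull h
    choose σ hσ using fun i => hz (mem_range_self i)
    -- the coordinate `none` carries the equation `∑ i, w i = 1`
    obtain ⟨u, hu⟩ := exists_rat_combination_of_real (fun i (o : Option κ) => o.elim 1 (p (σ i)))
      (fun o => o.elim 1 y) w <| by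
        rintro (_ | k)
        · simpa using hw₁
        · simpa [← hσ] using congrFun hwz k
    have hu₁ : ∑ i, u i = 1 := by simpa using hu none
    have hup : ∑ i, u i • p (σ i) = y := funext fun k => by simpa using hu (some k)
    have hwu : ∀ i, w i = u i := fun i => by
      refine hz_indep.eq_of_sum_eq_sum (s := univ) (w₂ := fun i => (u i : ℝ)) ?_ ?_ i
        (mem_univ i)
      · rw [hw₁]
        exact_mod_cast hu₁.symm
      · rw [hwz, ← hup]
        ext k
        simp [← hσ]
    refine mem_convexHull_of_exists_fintype u (p ∘ σ) (fun i => ?_) hu₁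
      (fun i => mem_range_self _) hup
    exact_mod_cast (hwu i ▸ hw₀ i).le
  · obtain ⟨u, hu₀, hu₁, rfl⟩ := mem_convexHull_range_iff.1 h
    refine mem_convexHull_range_iff.2 ⟨fun i => u i, fun i => Rat.cast_nonneg.2 (hu₀ i),
      by simpa using congrArg (Rat.cast : ℚ → ℝ) hu₁, ?_⟩
    ext k
    simp

theorem mem_closure_range_one_prod_iff {ι M : Type*} [Fintype ι] [AddCommMonoid M] {v : ι → M}
    {n : ℤ} {b : M} :
    (n, b) ∈ AddSubmonoid.closure (range fun j => ((1 : ℤ), v j)) ↔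
      ∃ m : ι → ℕ, n = ∑ j, (m j : ℤ) ∧ b = ∑ j, m j • v j := by
  rw [AddSubmonoid.mem_closure_range_iff_of_fintype]
  simp [Prod.ext_iff, Prod.fst_sum, Prod.snd_sum]

theorem exists_nat_eq_mul_of_nonneg {ι : Type*} [Fintype ι] {u : ι → ℚ} (hu : ∀ i, 0 ≤ u i) :
    ∃ N : ℕ, 0 < N ∧ ∃ m : ι → ℕ, ∀ i, (m i : ℚ) = N * u i := by
  refine ⟨∏ i, (u i).den, prod_pos fun i _ => (u i).den_pos,
    fun i => (∏ j, (u j).den) / (u i).den * (u i).num.toNat, fun i => ?_⟩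
  have hdvd : (u i).den ∣ ∏ j, (u j).den := dvd_prod_of_mem _ (mem_univ i)
  have hnum : ((u i).num.toNat : ℚ) = (u i).num := by
    exact_mod_cast Int.toNat_of_nonneg (Rat.num_nonneg.2 (hu i))
  rw [Nat.cast_mul, Nat.cast_div hdvd (by simp), hnum, ← Rat.mul_den_eq_num]
  field_simp

theorem mem_convexHull_intCast_iff_exists_mem_closure {ι κ : Type*} [Fintype ι] {p : ι → κ → ℤ}
    {y : κ → ℚ} :
    y ∈ convexHull ℚ (range fun j k => (p j k : ℚ)) ↔
      ∃ n : ℤ, 0 < n ∧ ∃ b : κ → ℤ,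
        (n, b) ∈ AddSubmonoid.closure (range fun j => ((1 : ℤ), p j)) ∧ ∀ k, y k = b k / n := by
  simp_rw [mem_convexHull_range_iff, mem_closure_range_one_prod_iff]
  constructor
  · rintro ⟨u, hu₀, hu₁, rfl⟩
    obtain ⟨N, hN, m, hm⟩ := exists_nat_eq_mul_of_nonneg hu₀
    refine ⟨N, by exact_mod_cast hN, _, ⟨m, ?_, rfl⟩, fun k => ?_⟩
    · have : ((∑ j, m j : ℕ) : ℚ) = N := by push_cast; simp [hm, ← mul_sum, hu₁]
      exact_mod_cast this.symm
    · have hN' : (N : ℚ) ≠ 0 := by positivity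
      push_cast
      simp [hm, ← mul_sum, hN', mul_assoc]
  · rintro ⟨n, hn, b, ⟨m, rfl, rfl⟩, hy⟩
    have hn' : ((∑ j, (m j : ℤ) : ℤ) : ℚ) ≠ 0 := by exact_mod_cast hn.ne'
    refine ⟨fun j => m j / (∑ j, (m j : ℤ) : ℤ), fun j => by positivity, ?_, funext fun k => ?_⟩
    · rw [← sum_div]; push_cast at hn' ⊢; exact div_self hn'
    · simp [hy k, sum_div, div_mul_eq_mul_div]

section LogSumExp

variable {ι κ : Type*} [Fintype ι] [Fintype κ]

theorem exists_forall_sum_exp_dotProduct_le {b : ι → κ → ℝ} {w : ι → ℝ} (hw : ∀ j, 0 < w j)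
    (hb : ∑ j, w j • b j = 0) :
    ∃ s : κ → ℝ, ∀ s', ∑ j, Real.exp (b j ⬝ᵥ s) ≤ ∑ j, Real.exp (b j ⬝ᵥ s') := by
  set L := (Matrix.of b).mulVecLin
  set Φ : (ι → ℝ) → ℝ := fun y => ∑ j, Real.exp (y j)
  set C := Real.log (Fintype.card ι)
  set K := (LinearMap.range L : Set (ι → ℝ)) ∩ {y | Φ y ≤ Φ 0}
  have hΦ : Continuous Φ := by fun_prop
  have hwy : ∀ y ∈ LinearMap.range L, ∑ j, w j * y j = 0 := by
    rintro _ ⟨s, rfl⟩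
    simpa [L, mulVec, sum_dotProduct] using congrArg (· ⬝ᵥ s) hb
  -- `y k ≤ C` for all `k` and `∑ k, w k * y k = 0` bound `y` from below as well
  have hbox : K ⊆ univ.pi fun j => Icc (C - C * (∑ k, w k) / w j) C := by
    rintro y ⟨hyL, hyΦ⟩ j -
    have hle : ∀ k, y k ≤ C := fun k => by
      rw [Real.le_log_iff_exp_le (by exact_mod_cast Fintype.card_pos_iff.2 ⟨k⟩)]
      calc Real.exp (y k) ≤ Φ y := single_le_sum (fun k _ => (Real.exp_pos (y k)).le) (mem_univ k)
        _ ≤ Φ 0 := hyΦ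
        _ = Fintype.card ι := by simp [Φ]
    have hsum : ∑ k, w k * (C - y k) = C * ∑ k, w k := by
      simp [mul_sub, sum_sub_distrib, hwy y hyL, ← sum_mul, mul_comm]
    have := single_le_sum (fun k _ => mul_nonneg (hw k).le (sub_nonneg.2 (hle k))) (mem_univ j)
    refine ⟨?_, hle j⟩
    rw [hsum, ← le_div_iff₀' (hw j)] at this
    linarith
  have hK : IsCompact K :=
    (isCompact_univ_pi fun j => isCompact_Icc).of_isClosed_subset
      ((LinearMap.range L).closed_of_finiteDimensional.inter (isClosed_le hΦ continuous_const)) hbox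
  obtain ⟨_, ⟨⟨s, rfl⟩, -⟩, hmin⟩ :=
    hK.exists_isMinOn ⟨0, zero_mem _, le_refl (Φ 0)⟩ hΦ.continuousOn
  refine ⟨s, fun s' => ?_⟩
  by_cases h : Φ (L s') ≤ Φ 0
  · exact hmin ⟨⟨s', rfl⟩, h⟩
  · exact (hmin ⟨zero_mem _, le_refl (Φ 0)⟩).trans (not_le.1 h).le

theorem sum_exp_dotProduct_smul_eq_zero {b : ι → κ → ℝ} {s : κ → ℝ}
    (hs : ∀ s', ∑ j, Real.exp (b j ⬝ᵥ s) ≤ ∑ j, Real.exp (b j ⬝ᵥ s')) :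
    ∑ j, Real.exp (b j ⬝ᵥ s) • b j = 0 := by
  classical
  ext i
  have hderiv : HasDerivAt (fun t : ℝ => ∑ j, Real.exp (b j ⬝ᵥ s + t * b j i))
      (∑ j, Real.exp (b j ⬝ᵥ s) * b j i) 0 := by
    simpa using HasDerivAt.fun_sum fun j _ =>
      (((hasDerivAt_id (0 : ℝ)).mul_const (b j i)).const_add (b j ⬝ᵥ s)).exp
  have hmin : IsLocalMin (fun t : ℝ => ∑ j, Real.exp (b j ⬝ᵥ s + t * b j i)) 0 :=
    Filter.Eventually.of_forall fun t => by
      have := hs (s + t • Pi.single i 1)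
      simp only [dotProduct_add, dotProduct_smul, dotProduct_single] at this
      simpa [mul_comm] using this
  simpa using hmin.hasDerivAt_eq_zero hderiv

end LogSumExp

theorem sum_norm_sq_pos {ι E : Type*} [Fintype ι] [NormedAddCommGroup E] {z : ι → E}
    (hz : z ≠ 0) : 0 < ∑ j, ‖z j‖ ^ 2 := by
  obtain ⟨j, hj⟩ := Function.ne_iff.1 hz
  exact sum_pos' (fun j _ => by positivity) ⟨j, mem_univ j, pow_pos (norm_pos_iff.2 hj) 2⟩

section MomentMap

variable {ι κ : Type*}

def torusOrbit [Fintype κ] (a : ι → κ → ℤ) : Set (ι → ℂ) :=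
  {z | ∃ (c : ℂˣ) (t : κ → ℂˣ), z = fun j => (c : ℂ) * ((∏ i, (t i : ℂ) ^ (-(a j i))) * 1)}

noncomputable def momentMap [Fintype ι] (a : ι → κ → ℤ) (z : ι → ℂ) : κ → ℝ :=
  fun i => (∑ j, ‖z j‖ ^ 2 * (a j i : ℝ)) / (∑ j, ‖z j‖ ^ 2)

variable (a : ι → κ → ℤ)

theorem momentMap_eq_centerMass [Fintype ι] (z : ι → ℂ) :
    momentMap a z = univ.centerMass (fun j => ‖z j‖ ^ 2) fun j i => (a j i : ℝ) := by
  ext i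
  simp [momentMap, centerMass, div_eq_inv_mul, mul_sum]

theorem momentMap_smul [Fintype ι] {c : ℂ} (hc : c ≠ 0) (z : ι → ℂ) :
    momentMap a (c • z) = momentMap a z := by
  simp_rw [momentMap_eq_centerMass, Pi.smul_apply, smul_eq_mul, norm_mul, mul_pow]
  exact centerMass_smul_left (hc := pow_ne_zero 2 (norm_ne_zero_iff.2 hc)) ..

theorem smul_mem_torusOrbit [Fintype κ] {z : ι → ℂ} (hz : z ∈ torusOrbit a) {c : ℂ}
    (hc : c ≠ 0) :
    c • z ∈ torusOrbit a := by
  obtain ⟨c', t, rfl⟩ := hz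
  exact ⟨Units.mk0 c hc * c', t, by ext j; simp [mul_assoc]⟩

theorem momentMap_mem_convexHull [Fintype ι] {z : ι → ℂ} (hz : z ≠ 0) :
    momentMap a z ∈ convexHull ℝ (range fun j i => (a j i : ℝ)) := by
  rw [momentMap_eq_centerMass]
  exact Finset.centerMass_mem_convexHull univ (fun j _ => by positivity) (sum_norm_sq_pos hz)
    fun j _ => mem_range_self j

theorem continuousOn_momentMap [Fintype ι] : ContinuousOn (momentMap a) {0}ᶜ :=
  continuousOn_pi.2 fun i =>
    ContinuousOn.div (by fun_prop) (by fun_prop) fun _ hz => (sum_norm_sq_pos hz).ne'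

theorem exp_mem_torusOrbit [Fintype κ] (s : κ → ℝ) :
    (fun j => (Real.exp ((fun i => (a j i : ℝ)) ⬝ᵥ s / 2) : ℂ)) ∈ torusOrbit a := by
  refine ⟨1, fun i => Units.mk0 (Complex.exp (-(s i / 2))) (Complex.exp_ne_zero _), ?_⟩
  ext j
  simp [← Complex.exp_int_mul, ← Complex.exp_sum, ← Complex.exp_neg, Complex.ofReal_exp,
    dotProduct, sum_div, mul_div_assoc]

theorem exists_mem_torusOrbit_momentMap_eq [Fintype ι] [Fintype κ] {w : ι → ℝ}
    (hw : ∀ j, 0 < w j) (hw₁ : ∑ j, w j = 1) :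
    ∃ z ∈ torusOrbit a, z ≠ 0 ∧ momentMap a z = ∑ j, w j • fun i => (a j i : ℝ) := by
  set A : ι → κ → ℝ := fun j i => a j i
  set x := ∑ j, w j • A j
  have hb : ∑ j, w j • (A j - x) = 0 := by
    simp only [smul_sub, sum_sub_distrib, ← sum_smul, hw₁, one_smul, x, sub_self]
  obtain ⟨s, hs⟩ := exists_forall_sum_exp_dotProduct_le hw hb
  obtain ⟨j₀⟩ : Nonempty ι := by
    by_contra h
    simp_all
  refine ⟨_, exp_mem_torusOrbit a s, Function.ne_iff.2 ⟨j₀, by simp⟩, ?_⟩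
  have hweights : (fun j => ‖(Real.exp (A j ⬝ᵥ s / 2) : ℂ)‖ ^ 2) =
      Real.exp (x ⬝ᵥ s) • fun j => Real.exp ((A j - x) ⬝ᵥ s) := by
    ext j
    rw [Complex.norm_real, Real.norm_of_nonneg (Real.exp_pos _).le, sq, ← Real.exp_add,
      Pi.smul_apply, smul_eq_mul, ← Real.exp_add, sub_dotProduct]
    ring_nf
  rw [momentMap_eq_centerMass, hweights, centerMass_smul_left (hc := (Real.exp_pos _).ne')]
  exact centerMass_eq_of_sum_smul_sub_eq_zero
    (sum_pos (fun j _ => Real.exp_pos _) ⟨j₀, mem_univ j₀⟩).ne' (sum_exp_dotProduct_smul_eq_zero hs)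

theorem momentMap_image_closure_torusOrbit [Fintype ι] [Fintype κ] :
    momentMap a '' (closure (torusOrbit a) \ {0}) =
      convexHull ℝ (range fun j i => (a j i : ℝ)) := by
  refine Subset.antisymm (image_subset_iff.2 fun z hz => momentMap_mem_convexHull a hz.2) ?_
  set K := closure (torusOrbit a) ∩ Metric.sphere 0 1
  have hK0 : K ⊆ {0}ᶜ := by
    rintro _ ⟨-, hz⟩ rfl
    simp at hz
  have hK : IsClosed (momentMap a '' K) :=
    (((isCompact_sphere 0 1).inter_left isClosed_closure).image_of_continuousOn
      ((continuousOn_momentMap a).mono hK0)).isClosed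
  have hpos : {x | ∃ w : ι → ℝ, (∀ j, 0 < w j) ∧ ∑ j, w j = 1 ∧
      ∑ j, w j • (fun i => (a j i : ℝ)) = x} ⊆ momentMap a '' K := by
    rintro _ ⟨w, hw, hw₁, rfl⟩
    obtain ⟨z, hz, hz0, hzx⟩ := exists_mem_torusOrbit_momentMap_eq a hw hw₁
    have hc : ((‖z‖⁻¹ : ℝ) : ℂ) ≠ 0 := by simpa using hz0
    refine ⟨((‖z‖⁻¹ : ℝ) : ℂ) • z, ⟨subset_closure (smul_mem_torusOrbit a hz hc), ?_⟩,
      by rw [momentMap_smul a hc, hzx]⟩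
    simp [norm_smul, hz0]
  calc convexHull ℝ _ ⊆ closure _ := convexHull_range_subset_closure_pos_combinations _
    _ ⊆ momentMap a '' K := closure_minimal hpos hK
    _ ⊆ _ := Set.image_mono fun z hz => (⟨hz.1, hK0 hz⟩ : z ∈ closure (torusOrbit a) \ {0})

end MomentMap

/-- **`μ(W) ∩ ℚ^r = Δ_ℚ(S)`.**

With the torus action of weights `a j` on `ℂ^{q+1}`, the affine cone
`W̃ = closure { c • (t • 𝟙) }` and the moment map
`μ z i = (∑ j, ‖z j‖² * a j i) / (∑ j, ‖z j‖²)`, a point `x ∈ ℝ^r` with all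
coordinates rational lies in `μ(W̃ \ {0})` if and only if there are `n > 0` and
`b : Fin r → ℤ` with `(n, b)` in the additive submonoid `S` generated by the
`(1, a j)` and `x i = b i / n` for every `i`. -/
theorem moment_image_rational_points (q r : ℕ) (a : Fin (q + 1) → Fin r → ℤ)
    (x : Fin r → ℝ) (hx : ∀ i, ∃ p : ℚ, x i = (p : ℝ)) :
    (x ∈ (fun z : Fin (q + 1) → ℂ => fun i : Fin r =>
        (∑ j, ‖z j‖ ^ 2 * (a j i : ℝ)) / (∑ j, ‖z j‖ ^ 2)) ''
      (closure {z : Fin (q + 1) → ℂ | ∃ (c : ℂˣ) (t : Fin r → ℂˣ),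
          z = fun j => (c : ℂ) * ((∏ i, (t i : ℂ) ^ (-(a j i))) * 1)} \ {0}))
      ↔ ∃ n : ℤ, 0 < n ∧ ∃ b : Fin r → ℤ,
          (n, b) ∈ AddSubmonoid.closure
            (Set.range fun j : Fin (q + 1) => ((1 : ℤ), a j)) ∧
          ∀ i, x i = (b i : ℝ) / (n : ℝ) := by
  choose y hy using hx
  obtain rfl : x = fun i => (y i : ℝ) := funext hy
  change _ ∈ momentMap a '' (closure (torusOrbit a) \ {0}) ↔ _
  have hcast : (range fun j i => (a j i : ℝ)) = range fun j i => ((a j i : ℚ) : ℝ) := by simp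
  rw [momentMap_image_closure_torusOrbit, hcast, ratCast_mem_convexHull_iff,
    mem_convexHull_intCast_iff_exists_mem_closure]
  simp only [← Rat.cast_inj (α := ℝ), Rat.cast_div, Rat.cast_intCast]
end

section
/- Let q, r be natural numbers, a : Fin (q+1) → (Fin r → ℤ), and let the torus T = (Fin r → ℂˣ) act on ℂ^{q+1} by (t • z) j = (∏ i, (t i : ℂ) ^ (−(a j i))) * z j. Let v ∈ ℂ^{q+1} and suppose the squared-norm function attains its minimum over the orbit at v, i.e., for every t ∈ T one has ∑ j, ‖(t • v) j‖² ≥ ∑ j, ‖v j‖². Then ∑ j, ‖v j‖² * (a j i) = 0 for every i ∈ Fin r; in particular, if v ≠ 0 then μ(v) = 0 where μ(z) i = (∑ j, ‖z j‖² * (a j i)) / (∑ j, ‖z j‖²). -/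
/-!
Restrict the orbit to the one-parameter subgroup `x ↦ exp x` in the `i`-th factor of the torus.
Along it the squared norm is `x ↦ ∑ j, ‖v j‖² * exp (-2 * a j i * x)`, which by minimality has a
minimum at `x = 0`; its derivative there, `-2 * ∑ j, ‖v j‖² * a j i`, must therefore vanish.
-/

theorem sum_mul_eq_zero_of_isLocalMin_sum_mul_exp {ι : Type*} (s : Finset ι) (c w : ι → ℝ)
    (h : IsLocalMin (fun x => ∑ j ∈ s, c j * Real.exp (w j * x)) 0) :
    ∑ j ∈ s, c j * w j = 0 := by
  have hderiv := HasDerivAt.fun_sum (u := s) fun j _ =>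
    (((hasDerivAt_id (0 : ℝ)).const_mul (w j)).exp).const_mul (c j)
  simp only [id, mul_zero, Real.exp_zero, one_mul, mul_one] at hderiv
  exact hderiv.deriv ▸ h.deriv_eq_zero

theorem prod_mulSingle_zpow {κ M : Type*} [Fintype κ] [DecidableEq κ] [CommGroupWithZero M]
    (i : κ) (u : Mˣ) (e : κ → ℤ) :
    ∏ k, ((Pi.mulSingle i u : κ → Mˣ) k : M) ^ e k = (u : M) ^ e i := by
  rw [Fintype.prod_eq_single i fun k hk => by simp [Pi.mulSingle_eq_of_ne hk],
    Pi.mulSingle_eq_same]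

theorem norm_exp_zpow_mul_sq (x : ℝ) (n : ℤ) (z : ℂ) :
    ‖Complex.exp x ^ n * z‖ ^ 2 = ‖z‖ ^ 2 * Real.exp (2 * n * x) := by
  rw [← Complex.exp_int_mul, norm_mul, mul_pow, mul_comm, ← Complex.ofReal_intCast,
    ← Complex.ofReal_mul, Complex.norm_exp_ofReal, ← Real.exp_nat_mul]
  push_cast
  ring_nf

/-- **A minimal vector of a torus orbit has vanishing moment map value.**

If the squared norm attains its minimum over the `T`-orbit of `v` at `v`
itself, then `∑ j, ‖v j‖² * a j i = 0` for every `i`; in particular, if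
`v ≠ 0` then `μ(v) = 0` for the moment map
`μ z i = (∑ j, ‖z j‖² * a j i) / (∑ j, ‖z j‖²)`. -/
theorem momentMap_eq_zero_of_min_norm (q r : ℕ) (a : Fin (q + 1) → Fin r → ℤ)
    (v : Fin (q + 1) → ℂ)
    (hmin : ∀ t : Fin r → ℂˣ,
      (∑ j, ‖v j‖ ^ 2) ≤ ∑ j, ‖(∏ i, (t i : ℂ) ^ (-(a j i))) * v j‖ ^ 2) :
    (∀ i : Fin r, (∑ j, ‖v j‖ ^ 2 * (a j i : ℝ)) = 0) ∧
      (v ≠ 0 → ∀ i : Fin r,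
        (∑ j, ‖v j‖ ^ 2 * (a j i : ℝ)) / (∑ j, ‖v j‖ ^ 2) = 0) := by
  have key (i : Fin r) : ∑ j, ‖v j‖ ^ 2 * (a j i : ℝ) = 0 := by
    have hloc : IsLocalMin (fun x => ∑ j, ‖v j‖ ^ 2 * Real.exp ((-2 * a j i : ℝ) * x)) 0 :=
      .of_forall fun x => by
        have := hmin (Pi.mulSingle i (Units.mk0 _ (Complex.exp_ne_zero x)))
        simp_rw [prod_mulSingle_zpow, Units.val_mk0, norm_exp_zpow_mul_sq] at this
        simpa [mul_assoc] using this
    have hderiv := sum_mul_eq_zero_of_isLocalMin_sum_mul_exp _ _ _ hloc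
    simp_rw [mul_left_comm _ (-2 : ℝ), ← Finset.mul_sum] at hderiv
    linarith
  exact ⟨key, fun _ i => by rw [key i, zero_div]⟩
end

section
/- Let k be a field, N' < N natural numbers, P := MvPolynomial (Fin (N+1)) k and P' := MvPolynomial (Fin (N'+1)) k, with ι, π, the weight w and the initial-form ideal construction I ↦ I' as in the context. If I is a homogeneous prime ideal of P, then Ideal.map π I' = Ideal.comap ι I. (Geometrically: in the degeneration by projection, the scheme-theoretic intersection of the special fiber X' with ℙ^{N'} ⊂ ℙ^N equals the closure of the image of X = V(I) under the projection away from V(x_0,…,x_{N'}).) -/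
/-!
Because the weights are nonnegative, `ι ∘ π` is the projection onto the weight-zero part and
`π ∘ ι = id`. The initial form `in_w f` is weighted homogeneous of degree `wdeg f`, so its
weight-zero part is `f` or `0`; hence `ι (π (in_w f)) ∈ I`, which gives `⊆`. Conversely, for `g`
homogeneous with `ι g ∈ I`, the polynomial `ι g` has weighted degree zero, so it is its own
initial form and `g = π (in_w (ι g))`; homogeneity of `I` reduces to such `g`.
-/

noncomputable section

/-- The weight `w` used for the degeneration by projection: `w i = 0` for
`i ≤ N'` and `w i = 1` for `i > N'`. -/
def projWeight (N N' : ℕ) : Fin (N + 1) → ℕ := fun i => if (i : ℕ) ≤ N' then 0 else 1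

/-- The `w`-initial form `in_w f` of a polynomial: the weighted homogeneous
component of `f` in degree `weightedTotalDegree w f`. -/
def initialForm (k : Type*) [Field k] (N N' : ℕ)
    (f : MvPolynomial (Fin (N + 1)) k) : MvPolynomial (Fin (N + 1)) k :=
  MvPolynomial.weightedHomogeneousComponent (projWeight N N')
    (MvPolynomial.weightedTotalDegree (projWeight N N') f) f

/-- The ideal `I'` of initial forms: it is generated by the `w`-initial forms of the
nonzero (standard-)homogeneous elements of `I`.  It defines the special fiber `X'` of
the degeneration `𝔛 = closure(𝔾_m · X) ⊆ ℙ^N × 𝔸¹`. -/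
def initialIdeal (k : Type*) [Field k] (N N' : ℕ)
    (I : Ideal (MvPolynomial (Fin (N + 1)) k)) : Ideal (MvPolynomial (Fin (N + 1)) k) :=
  Ideal.span {g | ∃ f ∈ I, f ≠ 0 ∧ (∃ n, MvPolynomial.IsHomogeneous f n) ∧
    g = initialForm k N N' f}

/-- The projection `π : k[x_0,…,x_N] → k[x_0,…,x_{N'}]`, sending `X i ↦ X i` for
`i ≤ N'` and `X i ↦ 0` for `i > N'`. -/
def projHom (k : Type*) [Field k] (N N' : ℕ) (hN : N' < N) :
    MvPolynomial (Fin (N + 1)) k →ₐ[k] MvPolynomial (Fin (N' + 1)) k :=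
  MvPolynomial.aeval fun i : Fin (N + 1) =>
    if h : (i : ℕ) ≤ N' then (MvPolynomial.X ⟨(i : ℕ), by omega⟩ :
      MvPolynomial (Fin (N' + 1)) k) else 0

/-- The inclusion `ι : k[x_0,…,x_{N'}] → k[x_0,…,x_N]` renaming variables along
`Fin (N'+1) ↪ Fin (N+1)`. -/
def inclHom (k : Type*) [Field k] (N N' : ℕ) (hN : N' < N) :
    MvPolynomial (Fin (N' + 1)) k →ₐ[k] MvPolynomial (Fin (N + 1)) k :=
  MvPolynomial.rename (Fin.castLE (by omega : N' + 1 ≤ N + 1))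

open MvPolynomial

section WeightZero

variable {σ R : Type*} [CommSemiring R]

theorem Finsupp.weight_eq_zero_iff_forall_mem_support (w : σ → ℕ) (m : σ →₀ ℕ) :
    Finsupp.weight w m = 0 ↔ ∀ i ∈ m.support, w i = 0 := by
  rw [Finsupp.weight_apply, Finsupp.sum, Finset.sum_eq_zero_iff]
  refine forall₂_congr fun i hi => ?_
  simp [Finsupp.mem_support_iff.mp hi]

theorem MvPolynomial.aeval_ite_X_eq_weightedHomogeneousComponent_zero (w : σ → ℕ)
    (φ : MvPolynomial σ R) :
    aeval (fun i => if w i = 0 then X i else 0) φ = weightedHomogeneousComponent w 0 φ := by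
  induction φ using MvPolynomial.induction_on' with
  | add p q hp hq => rw [map_add, map_add, hp, hq]
  | monomial m c =>
    have hm := isWeightedHomogeneous_monomial w m c rfl
    rw [aeval_monomial]
    by_cases h : Finsupp.weight w m = 0
    · have hsupp := (Finsupp.weight_eq_zero_iff_forall_mem_support w m).mp h
      rw [h] at hm
      rw [hm.weightedHomogeneousComponent_same,
        Finsupp.prod_congr fun i hi => by rw [if_pos (hsupp i hi)], monomial_eq]
      rfl
    · obtain ⟨i, hi, hwi⟩ : ∃ i ∈ m.support, w i ≠ 0 := by
        simpa [Finsupp.weight_eq_zero_iff_forall_mem_support] using h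
      rw [hm.weightedHomogeneousComponent_ne 0 (Ne.symm h), Finsupp.prod,
        Finset.prod_eq_zero hi
          (by rw [if_neg hwi]; exact zero_pow (Finsupp.mem_support_iff.mp hi)), mul_zero]

end WeightZero

namespace DegenerationByProjection

variable {k : Type*} [Field k] {N N' : ℕ} (hN : N' < N)

theorem projHom_comp_inclHom :
    (projHom k N N' hN).comp (inclHom k N N' hN) = AlgHom.id k _ := by
  refine algHom_ext fun j => ?_
  have hj : (j : ℕ) ≤ N' := Nat.lt_succ_iff.mp j.isLt
  simp [inclHom, projHom, hj]

theorem projHom_inclHom (g : MvPolynomial (Fin (N' + 1)) k) :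
    projHom k N N' hN (inclHom k N N' hN g) = g :=
  AlgHom.congr_fun (projHom_comp_inclHom hN) g

theorem inclHom_projHom (f : MvPolynomial (Fin (N + 1)) k) :
    inclHom k N N' hN (projHom k N N' hN f) =
      weightedHomogeneousComponent (projWeight N N') 0 f := by
  rw [← aeval_ite_X_eq_weightedHomogeneousComponent_zero]
  suffices (inclHom k N N' hN).comp (projHom k N N' hN) =
      aeval fun i => if projWeight N N' i = 0 then X i else 0 from AlgHom.congr_fun this f
  refine algHom_ext fun i => ?_
  by_cases hi : (i : ℕ) ≤ N'
  · simp [inclHom, projHom, projWeight, hi]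
  · simp [projHom, projWeight, hi]

theorem initialForm_inclHom (g : MvPolynomial (Fin (N' + 1)) k) :
    initialForm k N N' (inclHom k N N' hN g) = inclHom k N N' hN g := by
  have hzero : IsWeightedHomogeneous (projWeight N N') (inclHom k N N' hN g) 0 := by
    rw [← projHom_inclHom hN g, inclHom_projHom]
    exact weightedHomogeneousComponent_isWeightedHomogeneous 0 _
  rw [initialForm, isWeightedHomogeneous_zero_iff_weightedTotalDegree_eq_zero.mp hzero]
  exact hzero.weightedHomogeneousComponent_same

theorem inclHom_projHom_initialForm_mem {I : Ideal (MvPolynomial (Fin (N + 1)) k)}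
    {f : MvPolynomial (Fin (N + 1)) k} (hf : f ∈ I) :
    inclHom k N N' hN (projHom k N N' hN (initialForm k N N' f)) ∈ I := by
  have hlead := weightedHomogeneousComponent_isWeightedHomogeneous
    (weightedTotalDegree (projWeight N N') f) f (w := projWeight N N')
  rw [inclHom_projHom, initialForm]
  by_cases hd : weightedTotalDegree (projWeight N N') f = 0
  · have hzero : IsWeightedHomogeneous (projWeight N N') f 0 :=
      isWeightedHomogeneous_zero_iff_weightedTotalDegree_eq_zero.mpr hd
    rwa [hd, hzero.weightedHomogeneousComponent_same, hzero.weightedHomogeneousComponent_same]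
  · rw [hlead.weightedHomogeneousComponent_ne 0 (Ne.symm hd)]
    exact I.zero_mem

theorem map_initialIdeal_le_comap (I : Ideal (MvPolynomial (Fin (N + 1)) k)) :
    (initialIdeal k N N' I).map (projHom k N N' hN) ≤ I.comap (inclHom k N N' hN) := by
  rw [Ideal.map_le_iff_le_comap, initialIdeal, Ideal.span_le]
  rintro _ ⟨f, hf, -, -, rfl⟩
  rw [SetLike.mem_coe, Ideal.mem_comap, Ideal.mem_comap]
  exact inclHom_projHom_initialForm_mem hN hf

theorem mem_map_initialIdeal_of_isHomogeneous {I : Ideal (MvPolynomial (Fin (N + 1)) k)}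
    {g : MvPolynomial (Fin (N' + 1)) k} {n : ℕ} (hg : g.IsHomogeneous n)
    (hgI : inclHom k N N' hN g ∈ I) :
    g ∈ (initialIdeal k N N' I).map (projHom k N N' hN) := by
  by_cases hg0 : g = 0
  · rw [hg0]
    exact zero_mem _
  have hinj : Function.Injective (inclHom k N N' hN) :=
    rename_injective _ (Fin.castLE_injective _)
  have hmem : initialForm k N N' (inclHom k N N' hN g) ∈ initialIdeal k N N' I :=
    Ideal.subset_span ⟨_, hgI, (map_ne_zero_iff _ hinj).mpr hg0,
      ⟨n, hg.rename_isHomogeneous⟩, rfl⟩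
  rw [initialForm_inclHom] at hmem
  simpa only [projHom_inclHom] using Ideal.mem_map_of_mem (projHom k N N' hN) hmem

theorem comap_le_map_initialIdeal {I : Ideal (MvPolynomial (Fin (N + 1)) k)}
    (hI : ∀ f ∈ I, ∀ n : ℕ, homogeneousComponent n f ∈ I) :
    I.comap (inclHom k N N' hN) ≤ (initialIdeal k N N' I).map (projHom k N N' hN) := by
  intro g hg
  rw [← sum_homogeneousComponent g]
  refine Ideal.sum_mem _ fun n _ => mem_map_initialIdeal_of_isHomogeneous hN
    (homogeneousComponent_isHomogeneous n g) ?_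
  rw [inclHom, rename_homogeneousComponent]
  exact hI _ hg n

end DegenerationByProjection

theorem degeneration_by_projection_general (k : Type*) [Field k] (N N' : ℕ) (hN : N' < N)
    (I : Ideal (MvPolynomial (Fin (N + 1)) k))
    (hIhom : ∀ f ∈ I, ∀ n : ℕ, MvPolynomial.homogeneousComponent n f ∈ I) :
    Ideal.map (projHom k N N' hN) (initialIdeal k N N' I)
      = Ideal.comap (inclHom k N N' hN) I :=
  le_antisymm (DegenerationByProjection.map_initialIdeal_le_comap hN I)
    (DegenerationByProjection.comap_le_map_initialIdeal hN hIhom)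

/-- **Degeneration by projection: `I' · S' = I ∩ S'`.**

If `I` is a homogeneous prime ideal of `P = k[x_0,…,x_N]`, then the image of
the initial-form ideal `I'` under `π` equals `Ideal.comap ι I`.  Geometrically,
the scheme-theoretic intersection of the special fiber `X'` with
`ℙ^{N'} ⊂ ℙ^N` equals the closure of the image of `X = V(I)` under the
projection away from `V(x_0,…,x_{N'})`. -/
theorem degeneration_by_projection (k : Type*) [Field k] (N N' : ℕ) (hN : N' < N)
    (I : Ideal (MvPolynomial (Fin (N + 1)) k)) (hIprime : I.IsPrime)
    (hIhom : ∀ f ∈ I, ∀ n : ℕ, MvPolynomial.homogeneousComponent n f ∈ I) :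
    Ideal.map (projHom k N N' hN) (initialIdeal k N N' I)
      = Ideal.comap (inclHom k N N' hN) I :=
  degeneration_by_projection_general k N N' hN I hIhom
end
end

section
/- Let k be a field, N' < N natural numbers, P := MvPolynomial (Fin (N+1)) k, with ι, π, the weight w and the initial-form ideal construction I ↦ I' as in the context. Let I be a homogeneous prime ideal of P and assume the base locus of the projection is empty, i.e., every variable X j (j ∈ Fin (N+1)) lies in the radical of I ⊔ Ideal.span { X i : (i : ℕ) ≤ N' }. Then for every j with (j : ℕ) > N' there exists n ≥ 1 with (X j)^n ∈ I'; consequently some power of the ideal Ideal.span { X j : (j : ℕ) > N' } is contained in I'. -/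
noncomputable section

open Finsupp in
-- every monomial of an element of the ideal of low variables involves a low variable
lemma aux_mem_span_low {k : Type*} [Field k] {N N' : ℕ}
    {p : MvPolynomial (Fin (N + 1)) k}
    (hp : p ∈ Ideal.span {g : MvPolynomial (Fin (N + 1)) k |
        ∃ i : Fin (N + 1), (i : ℕ) ≤ N' ∧ g = MvPolynomial.X i}) :
    ∀ d ∈ p.support, ∃ i : Fin (N + 1), (i : ℕ) ≤ N' ∧ d i ≠ 0 := by
  classical
  refine Submodule.span_induction ?_ ?_ ?_ ?_ hp
  · rintro x ⟨i, hi, rfl⟩ d hd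
    rw [MvPolynomial.support_X] at hd
    simp only [Finset.mem_singleton] at hd
    subst hd
    exact ⟨i, hi, by simp⟩
  · intro d hd; simp at hd
  · intro x y hx hy ihx ihy d hd
    have := MvPolynomial.support_add hd
    rcases Finset.mem_union.mp this with h | h
    · exact ihx d h
    · exact ihy d h
  · intro a x hx ih d hd
    have := MvPolynomial.support_mul a x hd
    rcases Finset.mem_add.mp this with ⟨d1, hd1, d2, hd2, rfl⟩
    obtain ⟨i, hi, hne⟩ := ih d2 hd2
    exact ⟨i, hi, by simp [Finsupp.add_apply]; omega⟩

lemma aux_weight_single {N N' : ℕ} (j : Fin (N + 1)) (hj : (j : ℕ) > N') (n : ℕ) :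
    Finsupp.weight (projWeight N N') (Finsupp.single j n) = n := by
  rw [Finsupp.weight_apply, Finsupp.sum_single_index (by simp)]
  simp [projWeight, Nat.not_le_of_lt hj]

lemma aux_weight_lt {N N' : ℕ} {d : Fin (N + 1) →₀ ℕ} {n : ℕ}
    (hdeg : d.degree = n) {i₀ : Fin (N + 1)} (hi₀ : (i₀ : ℕ) ≤ N') (hne : d i₀ ≠ 0) :
    Finsupp.weight (projWeight N N') d < n := by
  classical
  have hmem : i₀ ∈ d.support := Finsupp.mem_support_iff.mpr hne
  have h1 : Finsupp.weight (projWeight N N') d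
      = ∑ i ∈ d.support, d i * projWeight N N' i := by
    rw [Finsupp.weight_apply, Finsupp.sum]
    simp [smul_eq_mul]
  have h2 : ∑ i ∈ d.support, d i * projWeight N N' i
      = ∑ i ∈ d.support.erase i₀, d i * projWeight N N' i := by
    rw [← Finset.sum_erase_add _ _ hmem]
    simp [projWeight, hi₀]
  have h3 : ∑ i ∈ d.support.erase i₀, d i * projWeight N N' i
      ≤ ∑ i ∈ d.support.erase i₀, d i := by
    apply Finset.sum_le_sum
    intro i _
    have : projWeight N N' i ≤ 1 := by unfold projWeight; split <;> simp
    calc d i * projWeight N N' i ≤ d i * 1 := Nat.mul_le_mul_left _ this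
    _ = d i := by ring
  have h4 : ∑ i ∈ d.support.erase i₀, d i < ∑ i ∈ d.support, d i := by
    rw [← Finset.sum_erase_add _ _ hmem]
    omega
  have h5 : ∑ i ∈ d.support, d i = n := by
    rw [← hdeg]; rfl
  omega

lemma aux_pow_mem {k : Type*} [Field k] {N N' : ℕ}
    (I : Ideal (MvPolynomial (Fin (N + 1)) k))
    (hIhom : ∀ f ∈ I, ∀ n : ℕ, MvPolynomial.homogeneousComponent n f ∈ I)
    {j : Fin (N + 1)} (hj : (j : ℕ) > N') {n : ℕ} (hn : 1 ≤ n)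
    (hmem : (MvPolynomial.X j : MvPolynomial (Fin (N + 1)) k) ^ n ∈
      I ⊔ Ideal.span {g : MvPolynomial (Fin (N + 1)) k |
        ∃ i : Fin (N + 1), (i : ℕ) ≤ N' ∧ g = MvPolynomial.X i}) :
    (MvPolynomial.X j : MvPolynomial (Fin (N + 1)) k) ^ n ∈ initialIdeal k N N' I := by
  classical
  obtain ⟨f, hf, g, hg, hfg⟩ := Submodule.mem_sup.mp hmem
  set w := projWeight N N'
  set f' := MvPolynomial.homogeneousComponent n f with hf'def
  set g' := MvPolynomial.homogeneousComponent n g with hg'def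
  have hXhom : ((MvPolynomial.X j : MvPolynomial (Fin (N + 1)) k) ^ n).IsHomogeneous n := by
    simpa using (MvPolynomial.isHomogeneous_X k j).pow n
  have hXcomp : MvPolynomial.homogeneousComponent n
      ((MvPolynomial.X j : MvPolynomial (Fin (N + 1)) k) ^ n)
      = (MvPolynomial.X j) ^ n := by
    rw [MvPolynomial.homogeneousComponent_of_mem
      ((MvPolynomial.mem_homogeneousSubmodule _ _).mpr hXhom)]
    simp
  have hsum : f' + g' = (MvPolynomial.X j) ^ n := by
    rw [hf'def, hg'def, ← map_add, hfg, hXcomp]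
  -- monomials of g' : degree n and contain a low variable
  have hg'supp : ∀ d ∈ g'.support, d.degree = n ∧ ∃ i : Fin (N + 1), (i : ℕ) ≤ N' ∧ d i ≠ 0 := by
    intro d hd
    have hcoeff := MvPolynomial.mem_support_iff.mp hd
    rw [hg'def, MvPolynomial.coeff_homogeneousComponent] at hcoeff
    by_cases hdeg : d.degree = n
    · refine ⟨hdeg, aux_mem_span_low hg d ?_⟩
      rw [MvPolynomial.mem_support_iff]
      simpa [hdeg] using hcoeff
    · simp [hdeg] at hcoeff
  -- the exponent single j n is not among the monomials of g'
  have hg'j : MvPolynomial.coeff (Finsupp.single j n) g' = 0 := by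
    by_contra hc
    obtain ⟨_, i, hi, hne⟩ := hg'supp _ (MvPolynomial.mem_support_iff.mpr hc)
    rw [Finsupp.single_apply] at hne
    by_cases hij : j = i
    · subst hij; omega
    · simp [hij] at hne
  have hf'j : MvPolynomial.coeff (Finsupp.single j n) f' = 1 := by
    have := congrArg (MvPolynomial.coeff (Finsupp.single j n)) hsum
    rw [MvPolynomial.coeff_add, hg'j, add_zero, MvPolynomial.coeff_X_pow] at this
    simpa using this
  have hf'ne : f' ≠ 0 := fun h => by simp [h] at hf'j
  -- supports of f'
  have hf'supp : ∀ d ∈ f'.support, d = Finsupp.single j n ∨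
      (Finsupp.weight w d < n) := by
    intro d hd
    by_cases hdj : d = Finsupp.single j n
    · exact Or.inl hdj
    · right
      have hco := congrArg (MvPolynomial.coeff d) hsum
      rw [MvPolynomial.coeff_add, MvPolynomial.coeff_X_pow,
        if_neg (fun h => hdj h.symm)] at hco
      have hcoeff := MvPolynomial.mem_support_iff.mp hd
      have hdg' : d ∈ g'.support := MvPolynomial.mem_support_iff.mpr (by
        intro h; rw [h, add_zero] at hco; exact hcoeff hco)
      obtain ⟨hdeg, i, hi, hne⟩ := hg'supp d hdg'
      exact aux_weight_lt hdeg hi hne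
  have hsingle : Finsupp.single j n ∈ f'.support :=
    MvPolynomial.mem_support_iff.mpr (by rw [hf'j]; exact one_ne_zero)
  have hwsingle : Finsupp.weight w (Finsupp.single j n) = n := aux_weight_single j hj n
  have hwtd : MvPolynomial.weightedTotalDegree w f' = n := by
    apply le_antisymm
    · rw [MvPolynomial.weightedTotalDegree]
      apply Finset.sup_le
      intro d hd
      rcases hf'supp d hd with rfl | h
      · rw [hwsingle]
      · omega
    · rw [← hwsingle]
      exact MvPolynomial.le_weightedTotalDegree w hsingle
  have hinit : initialForm k N N' f' = (MvPolynomial.X j) ^ n := by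
    rw [initialForm]
    show MvPolynomial.weightedHomogeneousComponent w (MvPolynomial.weightedTotalDegree w f') f' = _
    rw [hwtd]
    ext d
    by_cases hdj : d = Finsupp.single j n
    · subst hdj
      rw [MvPolynomial.coeff_weightedHomogeneousComponent, if_pos hwsingle, hf'j,
        MvPolynomial.coeff_X_pow, if_pos rfl]
    · have hrhs : MvPolynomial.coeff d ((MvPolynomial.X j) ^ n) = (0 : k) := by
        rw [MvPolynomial.coeff_X_pow, if_neg (fun h => hdj h.symm)]
      rw [hrhs, MvPolynomial.coeff_weightedHomogeneousComponent]
      by_cases hdf : MvPolynomial.coeff d f' = 0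
      · split <;> simp [hdf]
      · rcases hf'supp d (MvPolynomial.mem_support_iff.mpr hdf) with h | h
        · exact absurd h hdj
        · rw [if_neg (by omega)]
  exact Ideal.subset_span ⟨f', hIhom f hf n, hf'ne, ⟨n,
    MvPolynomial.homogeneousComponent_isHomogeneous n f⟩, hinit.symm⟩


/-- **Empty base locus: `I'` contains a power of each centre variable, hence a power
of the centre ideal `𝔞 = (x_{N'+1}, …, x_N)`.**

Let `I` be a homogeneous prime ideal of `k[x_0,…,x_N]` such that each variable `X j`
lies in the radical of `I ⊔ (x_0,…,x_{N'})` (i.e. the base locus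
`B = X ∩ V(x_0,…,x_{N'})` is empty).  Then for every `j > N'` some power `(X j)^n`,
`n ≥ 1`, lies in the initial-form ideal `I'`, and consequently some power of
`Ideal.span {X j : j > N'}` is contained in `I'`. -/
theorem initialIdeal_contains_power_of_center (k : Type*) [Field k] (N N' : ℕ)
    (hN : N' < N) (I : Ideal (MvPolynomial (Fin (N + 1)) k)) (hIprime : I.IsPrime)
    (hIhom : ∀ f ∈ I, ∀ n : ℕ, MvPolynomial.homogeneousComponent n f ∈ I)
    (hbase : ∀ j : Fin (N + 1), MvPolynomial.X j ∈
      (I ⊔ Ideal.span {g : MvPolynomial (Fin (N + 1)) k |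
        ∃ i : Fin (N + 1), (i : ℕ) ≤ N' ∧ g = MvPolynomial.X i}).radical) :
    (∀ j : Fin (N + 1), (j : ℕ) > N' →
        ∃ n : ℕ, 1 ≤ n ∧ (MvPolynomial.X j) ^ n ∈ initialIdeal k N N' I) ∧
      (∃ m : ℕ, (Ideal.span {g : MvPolynomial (Fin (N + 1)) k |
          ∃ j : Fin (N + 1), (j : ℕ) > N' ∧ g = MvPolynomial.X j}) ^ m
        ≤ initialIdeal k N N' I) := by
  have part1 : ∀ j : Fin (N + 1), (j : ℕ) > N' →
      ∃ n : ℕ, 1 ≤ n ∧ (MvPolynomial.X j) ^ n ∈ initialIdeal k N N' I := by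
    intro j hj
    obtain ⟨n, hn⟩ := Ideal.mem_radical_iff.mp (hbase j)
    refine ⟨n + 1, Nat.le_add_left 1 n, ?_⟩
    apply aux_pow_mem I hIhom hj (Nat.le_add_left 1 n)
    rw [pow_succ]
    exact Ideal.mul_mem_right _ _ hn
  refine ⟨part1, ?_⟩
  have hfin : ({g : MvPolynomial (Fin (N + 1)) k |
      ∃ j : Fin (N + 1), (j : ℕ) > N' ∧ g = MvPolynomial.X j}).Finite := by
    have : {g : MvPolynomial (Fin (N + 1)) k |
        ∃ j : Fin (N + 1), (j : ℕ) > N' ∧ g = MvPolynomial.X j}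
        = (fun j : Fin (N + 1) => MvPolynomial.X j) ''
          {j : Fin (N + 1) | (j : ℕ) > N'} := by
      ext g
      simp only [Set.mem_setOf_eq, Set.mem_image]
      constructor
      · rintro ⟨j, hj, rfl⟩; exact ⟨j, hj, rfl⟩
      · rintro ⟨j, hj, rfl⟩; exact ⟨j, hj, rfl⟩
    rw [this]
    exact Set.Finite.image _ (Set.toFinite _)
  apply Ideal.exists_pow_le_of_le_radical_of_fg _ (Submodule.fg_span hfin)
  rw [Submodule.span_le]
  rintro g ⟨j, hj, rfl⟩
  obtain ⟨n, _, hn⟩ := part1 j hj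
  exact Ideal.mem_radical_iff.mpr ⟨n, hn⟩
end
end

section
/- Let k be a field, N' < N natural numbers, P := MvPolynomial (Fin (N+1)) k, with ι, π, the weight w and the initial-form ideal construction I ↦ I' as in the context. Let I be a homogeneous prime ideal of P such that every variable X j lies in the radical of I ⊔ Ideal.span { X i : (i : ℕ) ≤ N' }. Then radical I' = radical (Ideal.map ι (Ideal.comap ι I) ⊔ Ideal.span { X j : (j : ℕ) > N' }). (Geometrically: when the base locus is empty, the special fiber X' of the degeneration by projection coincides, as a set, with the image p(X) of X under the projection.) -/
noncomputable section

open MvPolynomial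

lemma weight_projWeight_eq_zero_iff (N N' : ℕ) (d : Fin (N + 1) →₀ ℕ) :
    Finsupp.weight (projWeight N N') d = 0 ↔ ∀ i : Fin (N + 1), N' < (i : ℕ) → d i = 0 := by
  rw [Finsupp.weight_apply, Finsupp.sum, Finset.sum_eq_zero_iff]
  constructor
  · intro h i hi
    by_cases hd : d i = 0
    · exact hd
    · have := h i (Finsupp.mem_support_iff.mpr hd)
      simpa [projWeight, Nat.not_le.mpr hi] using this
  · intro h i hi
    by_cases hsm : (i : ℕ) ≤ N'
    · simp [projWeight, hsm]
    · exact absurd (h i (Nat.not_le.mp hsm)) (Finsupp.mem_support_iff.mp hi)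

lemma weight_projWeight_single (N N' : ℕ) (j : Fin (N + 1)) (hj : N' < (j : ℕ)) (M : ℕ) :
    Finsupp.weight (projWeight N N') (Finsupp.single j M) = M := by
  rw [Finsupp.weight_apply, Finsupp.sum_single_index]
  · simp [projWeight, Nat.not_le.mpr hj]
  · simp

lemma weight_projWeight_lt (N N' : ℕ) (d : Fin (N + 1) →₀ ℕ) (i0 : Fin (N + 1))
    (hi0 : (i0 : ℕ) ≤ N') (hd : d i0 ≠ 0) :
    Finsupp.weight (projWeight N N') d < d.degree := by
  have hmem : i0 ∈ d.support := Finsupp.mem_support_iff.mpr hd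
  rw [Finsupp.weight_apply, Finsupp.sum, Finsupp.degree]
  calc ∑ i ∈ d.support, d i • projWeight N N' i
      = ∑ i ∈ d.support.erase i0, d i • projWeight N N' i := by
        rw [← Finset.add_sum_erase _ _ hmem]
        simp [projWeight, hi0]
    _ ≤ ∑ i ∈ d.support.erase i0, d i := by
        refine Finset.sum_le_sum fun i _ => ?_
        by_cases h : (i : ℕ) ≤ N' <;> simp [projWeight, h]
    _ < ∑ i ∈ d.support, d i := by
        rw [← Finset.add_sum_erase _ _ hmem]
        omega

lemma initialForm_of_wtd_zero (k : Type*) [Field k] (N N' : ℕ)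
    (f : MvPolynomial (Fin (N + 1)) k)
    (h : MvPolynomial.weightedTotalDegree (projWeight N N') f = 0) :
    initialForm k N N' f = f := by
  unfold initialForm
  rw [h]
  ext d
  rw [coeff_weightedHomogeneousComponent]
  split_ifs with hd
  · rfl
  · by_contra hc
    have : d ∈ f.support := Finsupp.mem_support_iff.mpr fun h0 => hc h0.symm
    exact hd (Nat.le_zero.mp (h ▸ le_weightedTotalDegree _ this))

lemma bigSet_eq (k : Type*) [Field k] (N N' : ℕ) :
    {g : MvPolynomial (Fin (N + 1)) k | ∃ j : Fin (N + 1), (j : ℕ) > N' ∧ g = MvPolynomial.X j}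
      = MvPolynomial.X '' {j : Fin (N + 1) | N' < (j : ℕ)} := by
  ext g
  simp only [Set.mem_setOf_eq, Set.mem_image, gt_iff_lt]
  exact ⟨fun ⟨j, h1, h2⟩ => ⟨j, h1, h2.symm⟩, fun ⟨j, h1, h2⟩ => ⟨j, h1, h2.symm⟩⟩

lemma smallSet_eq (k : Type*) [Field k] (N N' : ℕ) :
    {g : MvPolynomial (Fin (N + 1)) k | ∃ i : Fin (N + 1), (i : ℕ) ≤ N' ∧ g = MvPolynomial.X i}
      = MvPolynomial.X '' {i : Fin (N + 1) | (i : ℕ) ≤ N'} := by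
  ext g
  simp only [Set.mem_setOf_eq, Set.mem_image]
  exact ⟨fun ⟨j, h1, h2⟩ => ⟨j, h1, h2.symm⟩, fun ⟨j, h1, h2⟩ => ⟨j, h1, h2.symm⟩⟩

lemma exists_inclHom_eq (k : Type*) [Field k] (N N' : ℕ) (hN : N' < N)
    (f : MvPolynomial (Fin (N + 1)) k)
    (h : ∀ d ∈ f.support, ∀ i : Fin (N + 1), N' < (i : ℕ) → d i = 0) :
    ∃ g, inclHom k N N' hN g = f := by
  classical
  apply exists_rename_eq_of_vars_subset_range f (Fin.castLE (by omega : N' + 1 ≤ N + 1))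
    (Fin.castLE_injective _)
  intro i hi
  rw [Finset.mem_coe, mem_vars] at hi
  obtain ⟨d, hd, hid⟩ := hi
  have : (i : ℕ) ≤ N' := by
    by_contra hc
    exact (Finsupp.mem_support_iff.mp hid) (h d hd i (Nat.not_le.mp hc))
  exact ⟨⟨(i : ℕ), by omega⟩, by ext; simp⟩

/-- **Empty base locus: the special fiber `X'` equals `p(X)` as a set.**

Let `I` be a homogeneous prime ideal of `k[x_0,…,x_N]` such that each variable `X j`
lies in the radical of `I ⊔ (x_0,…,x_{N'})` (empty base locus).  Then the radical
of the initial-form ideal `I'` equals the radical of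
`ι(ι⁻¹(I)) ⊔ (x_{N'+1},…,x_N)`; geometrically the special fiber `X'` of the
degeneration by projection coincides, as a set, with the image `p(X)` of `X`
under the projection. -/
theorem radical_initialIdeal_eq (k : Type*) [Field k] (N N' : ℕ) (hN : N' < N)
    (I : Ideal (MvPolynomial (Fin (N + 1)) k)) (hIprime : I.IsPrime)
    (hIhom : ∀ f ∈ I, ∀ n : ℕ, MvPolynomial.homogeneousComponent n f ∈ I)
    (hbase : ∀ j : Fin (N + 1), MvPolynomial.X j ∈
      (I ⊔ Ideal.span {g : MvPolynomial (Fin (N + 1)) k |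
        ∃ i : Fin (N + 1), (i : ℕ) ≤ N' ∧ g = MvPolynomial.X i}).radical) :
    (initialIdeal k N N' I).radical
      = (Ideal.map (inclHom k N N' hN) (Ideal.comap (inclHom k N N' hN) I)
          ⊔ Ideal.span {g : MvPolynomial (Fin (N + 1)) k |
              ∃ j : Fin (N + 1), (j : ℕ) > N' ∧ g = MvPolynomial.X j}).radical := by
  classical
  set ι := inclHom k N N' hN with hι
  set B : Ideal (MvPolynomial (Fin (N + 1)) k) :=
    Ideal.span {g | ∃ j : Fin (N + 1), (j : ℕ) > N' ∧ g = MvPolynomial.X j} with hB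
  set S : Ideal (MvPolynomial (Fin (N + 1)) k) :=
    Ideal.span {g | ∃ i : Fin (N + 1), (i : ℕ) ≤ N' ∧ g = MvPolynomial.X i} with hS
  set J : Ideal (MvPolynomial (Fin (N + 1)) k) :=
    Ideal.map ι (Ideal.comap ι I) ⊔ B with hJ
  -- membership criteria for the monomial ideals B and S
  have hBmem : ∀ p : MvPolynomial (Fin (N + 1)) k,
      (∀ m ∈ p.support, ∃ i : Fin (N + 1), N' < (i : ℕ) ∧ m i ≠ 0) → p ∈ B := by
    intro p hp
    rw [hB, bigSet_eq, mem_ideal_span_X_image]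
    exact fun m hm => (hp m hm).imp fun i ⟨h1, h2⟩ => ⟨h1, h2⟩
  have hSmem : ∀ p : MvPolynomial (Fin (N + 1)) k, p ∈ S →
      ∀ m ∈ p.support, ∃ i : Fin (N + 1), (i : ℕ) ≤ N' ∧ m i ≠ 0 := by
    intro p hp
    rw [hS, smallSet_eq, mem_ideal_span_X_image] at hp
    exact fun m hm => (hp m hm).imp fun i ⟨h1, h2⟩ => ⟨h1, h2⟩
  -- Step 1 : the initial ideal is contained in the radical of J
  have h1 : initialIdeal k N N' I ≤ J.radical := by
    rw [initialIdeal, Ideal.span_le]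
    rintro g ⟨f, hfI, hf0, ⟨n, hfhom⟩, rfl⟩
    by_cases hD : weightedTotalDegree (projWeight N N') f = 0
    · rw [initialForm_of_wtd_zero k N N' f hD]
      have hsupp : ∀ d ∈ f.support, ∀ i : Fin (N + 1), N' < (i : ℕ) → d i = 0 := by
        intro d hd
        have hle := le_weightedTotalDegree (projWeight N N') hd
        rw [hD, Nat.le_zero] at hle
        exact (weight_projWeight_eq_zero_iff N N' d).mp hle
      obtain ⟨g, hg⟩ := exists_inclHom_eq k N N' hN f hsupp
      have : f ∈ Ideal.map ι (Ideal.comap ι I) := by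
        rw [← hg]
        exact Ideal.mem_map_of_mem _ (by rwa [Ideal.mem_comap, hg])
      exact Ideal.le_radical (Ideal.mem_sup_left this)
    · refine Ideal.le_radical (Ideal.mem_sup_right (hBmem _ ?_))
      intro m hm
      have hcm : coeff m (initialForm k N N' f) ≠ 0 := mem_support_iff.mp hm
      rw [initialForm, coeff_weightedHomogeneousComponent] at hcm
      by_cases hw : Finsupp.weight (projWeight N N') m = weightedTotalDegree (projWeight N N') f
      · by_contra hc
        push_neg at hc
        exact hD (hw ▸ (weight_projWeight_eq_zero_iff N N' m).mpr hc)
      · exact absurd (if_neg hw) hcm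
  -- Step 2 : J is contained in the radical of the initial ideal
  have h2 : J ≤ (initialIdeal k N N' I).radical := by
    rw [hJ]
    refine sup_le ?_ ?_
    · -- the part coming from the small variables
      refine le_trans ?_ (Ideal.le_radical (I := initialIdeal k N N' I))
      rw [Ideal.map_le_iff_le_comap]
      intro p hp
      rw [Ideal.mem_comap] at hp ⊢
      have hFsupp : ∀ d ∈ (ι p).support, ∀ i : Fin (N + 1), N' < (i : ℕ) → d i = 0 := by
        intro d hd i hi
        rw [hι, inclHom, rename, ← rename] at hd
        rw [support_rename_of_injective (Fin.castLE_injective _)] at hd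
        obtain ⟨e, _, rfl⟩ := Finset.mem_image.mp hd
        apply Finsupp.mapDomain_notin_range
        rintro ⟨x, rfl⟩
        have : (x : ℕ) ≤ N' := by omega
        simp only [Fin.coe_castLE] at hi
        omega
      have hcomp : ∀ c : ℕ, homogeneousComponent c (ι p) ∈ initialIdeal k N N' I := by
        intro c
        by_cases h0 : homogeneousComponent c (ι p) = 0
        · rw [h0]; exact Ideal.zero_mem _
        · have hsub : ∀ d ∈ (homogeneousComponent c (ι p)).support, d ∈ (ι p).support := by
            intro d hd
            have := mem_support_iff.mp hd
            rw [coeff_homogeneousComponent] at this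
            split_ifs at this with h
            · exact mem_support_iff.mpr this
            · exact absurd rfl this
          have hwtd : weightedTotalDegree (projWeight N N') (homogeneousComponent c (ι p)) = 0 := by
            apply Nat.le_zero.mp
            refine Finset.sup_le fun d hd => ?_
            rw [(weight_projWeight_eq_zero_iff N N' d).mpr
              (fun i hi => hFsupp d (hsub d hd) i hi)]
          refine Ideal.subset_span ⟨homogeneousComponent c (ι p), hIhom _ hp c, h0,
            ⟨c, homogeneousComponent_isHomogeneous c (ι p)⟩, ?_⟩
          rw [initialForm_of_wtd_zero k N N' _ hwtd]
      have hsumF := sum_homogeneousComponent (ι p)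
      rw [← hsumF]
      exact Ideal.sum_mem _ fun c _ => hcomp c
    · -- the big variables lie in the radical of the initial ideal
      rw [Ideal.span_le]
      rintro g ⟨j, hj, rfl⟩
      obtain ⟨m, hm⟩ := hbase j
      have hMmem : MvPolynomial.X j ^ (m + 1) ∈ I ⊔ S := by
        rw [pow_succ]
        exact Ideal.mul_mem_right _ _ hm
      set M := m + 1 with hMdef
      rw [Submodule.mem_sup] at hMmem
      obtain ⟨y, hy, z, hz, hyz⟩ := hMmem
      set fM := homogeneousComponent M y with hfM
      set sM := homogeneousComponent M z with hsMdef
      have hXhom : MvPolynomial.IsHomogeneous (MvPolynomial.X j ^ M : MvPolynomial (Fin (N + 1)) k) M := by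
        simpa using (isHomogeneous_X k j).pow M
      have hXcomp : homogeneousComponent M (MvPolynomial.X j ^ M : MvPolynomial (Fin (N + 1)) k)
          = MvPolynomial.X j ^ M := by
        rw [homogeneousComponent_of_mem ((mem_homogeneousSubmodule M _).mpr hXhom), if_pos rfl]
      have hsum : fM + sM = MvPolynomial.X j ^ M := by
        have h := congrArg (homogeneousComponent M) hyz
        rw [map_add, hXcomp] at h
        exact h
      have hfMI : fM ∈ I := hIhom y hy M
      have hsMsupp : ∀ d ∈ sM.support,
          (∃ i : Fin (N + 1), (i : ℕ) ≤ N' ∧ d i ≠ 0) ∧ d.degree = M := by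
        intro d hd
        have hc := mem_support_iff.mp hd
        rw [hsMdef, coeff_homogeneousComponent] at hc
        split_ifs at hc with hdeg
        · exact ⟨hSmem z hz d (mem_support_iff.mpr hc), hdeg⟩
        · exact absurd rfl hc
      set μ0 : Fin (N + 1) →₀ ℕ := Finsupp.single j M with hμ0
      have hμ0s : coeff μ0 sM = 0 := by
        by_contra hc
        obtain ⟨⟨i, hi, hne⟩, _⟩ := hsMsupp μ0 (mem_support_iff.mpr hc)
        have hij : j ≠ i := by
          intro h
          subst h
          omega
        rw [hμ0, Finsupp.single_apply, if_neg hij] at hne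
        exact hne rfl
      have hμ0f : coeff μ0 fM = 1 := by
        have := congrArg (coeff μ0) hsum
        rwa [coeff_add, hμ0s, add_zero, X_pow_eq_monomial, coeff_monomial, if_pos rfl] at this
      have hfM0 : fM ≠ 0 := fun h => by simp [h] at hμ0f
      have hwμ0 : Finsupp.weight (projWeight N N') μ0 = M := weight_projWeight_single N N' j hj M
      have hlt : ∀ d ∈ fM.support, d ≠ μ0 → Finsupp.weight (projWeight N N') d < M := by
        intro d hd hne
        have hcf := mem_support_iff.mp hd
        have hds : coeff d sM ≠ 0 := by
          intro h0
          have := congrArg (coeff d) hsum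
          rw [coeff_add, h0, add_zero, X_pow_eq_monomial, coeff_monomial,
            if_neg (fun h => hne h.symm)] at this
          exact hcf this
        obtain ⟨⟨i, hi, hne'⟩, hdeg⟩ := hsMsupp d (mem_support_iff.mpr hds)
        have := weight_projWeight_lt N N' d i hi hne'
        omega
      have hwtd : weightedTotalDegree (projWeight N N') fM = M := by
        apply le_antisymm
        · refine Finset.sup_le fun d hd => ?_
          by_cases hd' : d = μ0
          · rw [hd', hwμ0]
          · exact le_of_lt (hlt d hd hd')
        · have := le_weightedTotalDegree (w := projWeight N N') (φ := fM)
            (d := μ0) (mem_support_iff.mpr (by rw [hμ0f]; exact one_ne_zero))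
          rwa [hwμ0] at this
      have hinit : initialForm k N N' fM = MvPolynomial.X j ^ M := by
        rw [initialForm, hwtd]
        ext d
        rw [coeff_weightedHomogeneousComponent, X_pow_eq_monomial, coeff_monomial]
        by_cases hdμ : d = μ0
        · subst hdμ
          rw [if_pos hwμ0, if_pos rfl, hμ0f]
        · rw [if_neg (show ¬ μ0 = d from fun h => hdμ h.symm)]
          split_ifs with hw
          · by_contra hc
            exact absurd hw (ne_of_lt (hlt d (mem_support_iff.mpr hc) hdμ))
          · rfl
      exact ⟨M, by
        rw [← hinit]
        exact Ideal.subset_span ⟨fM, hfMI, hfM0, ⟨M, homogeneousComponent_isHomogeneous M y⟩, rfl⟩⟩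
  refine le_antisymm ?_ ?_
  · have := Ideal.radical_mono h1
    rwa [Ideal.radical_idem] at this
  · have := Ideal.radical_mono h2
    rwa [Ideal.radical_idem] at this
end
end

section
/- Let r be a natural number and let S be an additive submonoid of ℤ × (Fin r → ℤ) all of whose elements have nonnegative first coordinate. Then the set Δ_ℚ(S) = { x ∈ (Fin r → ℚ) : ∃ n > 0, ∃ b, (n, b) ∈ S ∧ x = (1/n) • (fun i => (b i : ℚ)) } is a convex subset of the ℚ-vector space Fin r → ℚ (Convex ℚ Δ_ℚ(S)). -/
/-!
Write the rational weights as `p / (p + q)` and `q / (p + q)` with `p q : ℕ`. For `(n, b), (m, c) ∈ S`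
with `n, m > 0`, the element `(p * m) • (n, b) + (q * n) • (m, c)` of `S` has first coordinate
`(p + q) * m * n`, and its point `(1 / ((p + q) * m * n)) • (p * m • b + q * n • c)` is exactly
`(p / (p + q)) • (1 / n) • b + (q / (p + q)) • (1 / m) • c`.
-/

theorem Rat.natCast_num_toNat {x : ℚ} (hx : 0 ≤ x) : (x.num.toNat : ℚ) = x * x.den := by
  rw [← Int.cast_natCast, Int.toNat_of_nonneg (Rat.num_nonneg.2 hx), Rat.mul_den_eq_num]

theorem Rat.exists_nat_eq_div_of_add_eq_one {a t : ℚ} (ha : 0 ≤ a) (ht : 0 ≤ t)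
    (hat : a + t = 1) : ∃ p q : ℕ, 0 < p + q ∧ a = p / (p + q) ∧ t = q / (p + q) := by
  have hsum : ((a.num.toNat * t.den + t.num.toNat * a.den : ℕ) : ℚ) = a.den * t.den := by
    push_cast
    rw [Rat.natCast_num_toNat ha, Rat.natCast_num_toNat ht]
    linear_combination (a.den * t.den : ℚ) * hat
  refine ⟨a.num.toNat * t.den, t.num.toNat * a.den, ?_, ?_, ?_⟩
  · rw [← Nat.cast_pos (α := ℚ), hsum]
    positivity
  · rw [← Nat.cast_add, hsum]
    push_cast
    rw [Rat.natCast_num_toNat ha]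
    field_simp
  · rw [← Nat.cast_add, hsum]
    push_cast
    rw [Rat.natCast_num_toNat ht]
    field_simp

section RatPoint

variable {ι : Type*}

def ratPoint (s : ℤ × (ι → ℤ)) : ι → ℚ := (1 / (s.1 : ℚ)) • fun i => (s.2 i : ℚ)

theorem ratPoint_nsmul_add_nsmul {s s' : ℤ × (ι → ℤ)} (hs : s.1 ≠ 0) (hs' : s'.1 ≠ 0)
    (k l : ℕ) :
    ratPoint (k • s + l • s') =
      (k * s.1 / (k * s.1 + l * s'.1) : ℚ) • ratPoint s +
        (l * s'.1 / (k * s.1 + l * s'.1) : ℚ) • ratPoint s' := by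
  ext i
  simp [ratPoint]
  field_simp

end RatPoint

theorem deltaQ_convex_general (r : ℕ) (S : AddSubmonoid (ℤ × (Fin r → ℤ))) :
    Convex ℚ {x : Fin r → ℚ | ∃ n : ℤ, 0 < n ∧ ∃ b : Fin r → ℤ,
      (n, b) ∈ S ∧ x = (1 / (n : ℚ)) • fun i => ((b i : ℚ))} := by
  rintro _ ⟨n, hn, b, hb, rfl⟩ _ ⟨m, hm, c, hc, rfl⟩ a t ha ht hat
  obtain ⟨p, q, hpq, rfl, rfl⟩ := Rat.exists_nat_eq_div_of_add_eq_one ha ht hat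
  lift n to ℕ using hn.le
  lift m to ℕ using hm.le
  set s := (p * m) • ((n : ℤ), b) + (q * n) • ((m : ℤ), c)
  have hs : s ∈ S := S.add_mem (S.nsmul_mem hb _) (S.nsmul_mem hc _)
  have hs₁ : s.1 = (p + q) * m * n := by
    simp only [Prod.smul_mk, Nat.cast_mul, nsmul_eq_mul, Prod.mk_add_mk, s]
    ring
  refine ⟨s.1, by rw [hs₁]; exact mul_pos (mul_pos (by exact_mod_cast hpq) hm) hn, s.2, hs, ?_⟩
  change _ = ratPoint s
  rw [ratPoint_nsmul_add_nsmul hn.ne' hm.ne']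
  have hm' : (m : ℚ) ≠ 0 := by exact_mod_cast hm.ne'
  have hn' : (n : ℚ) ≠ 0 := by exact_mod_cast hn.ne'
  congr 2 <;> push_cast <;> field_simp

/-- **`Δ_ℚ(S)` is convex.**

For an additive submonoid `S` of `ℤ × ℤ^r` all of whose elements have
nonnegative first coordinate, the set
`Δ_ℚ(S) = { (1/n) • b : (n, b) ∈ S, n > 0 } ⊆ ℚ^r` is convex over `ℚ`. -/
theorem deltaQ_convex (r : ℕ) (S : AddSubmonoid (ℤ × (Fin r → ℤ)))
    (hS : ∀ s ∈ S, 0 ≤ s.1) :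
    Convex ℚ {x : Fin r → ℚ | ∃ n : ℤ, 0 < n ∧ ∃ b : Fin r → ℤ,
      (n, b) ∈ S ∧ x = (1 / (n : ℚ)) • fun i => ((b i : ℚ))} :=
  deltaQ_convex_general r S
end

section
/- Let k be a field and A a commutative integral domain equipped with an ℕ-grading 𝒜 : ℕ → Submodule k A making A a graded k-algebra. Assume every element of the degree-zero part 𝒜 0 is algebraic over k, and assume there exists a family of r+1 elements of A that is algebraically independent over k. Then there exist d ≥ 1 and a family u : Fin (r+1) → A with u i ∈ 𝒜 d for every i such that u is algebraically independent over k; that is, A contains r+1 homogeneous elements of one and the same positive degree that are algebraically independent over k. -/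
/-!
Every element of `A` is a sum of homogeneous components; those of degree `0` are algebraic over
`k` and the others lie in the set `S` of homogeneous elements of positive degree, so `A` is
integral over `k[S]`. Hence `S` contains a transcendence basis of `A` over `k`, which has at least
`r + 1` elements since `trdeg k A ≥ r + 1`. Finally, if `w i ∈ 𝒜 (d i)` then the powers
`w i ^ (D / d i)` with `D = ∏ d i` all have degree `D` and stay algebraically independent.
-/

theorem AlgebraicIndependent.exists_algebraicIndependent_forall_mem
    {ι R A : Type*} [CommRing R] [Nontrivial R] [CommRing A] [NoZeroDivisors A] [Algebra R A]
    {x : ι → A} (hx : AlgebraicIndependent R x)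
    (s : Set A) [Algebra.IsAlgebraic (Algebra.adjoin R s) A] :
    ∃ y : ι → A, (∀ i, y i ∈ s) ∧ AlgebraicIndependent R y := by
  have := (faithfulSMul_iff_algebraMap_injective R A).mpr hx.algebraMap_injective
  obtain ⟨t, hts, ht⟩ := exists_isTranscendenceBasis_subset (R := R) s
  obtain ⟨f⟩ := Cardinal.lift_mk_le'.mp (ht.cardinalMk_eq_trdeg ▸ hx.lift_cardinalMk_le_trdeg)
  exact ⟨fun i => f i, fun i => hts (f i).2, ht.1.comp f f.injective⟩

theorem AlgebraicIndependent.pow {ι R A : Type*} [CommRing R] [CommRing A] [Algebra R A]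
    {x : ι → A} (hx : AlgebraicIndependent R x) {n : ι → ℕ} (hn : ∀ i, 0 < n i) :
    AlgebraicIndependent R fun i => x i ^ n i := by
  simpa using
    hx.polynomial_aeval_of_transcendental fun i => (Polynomial.transcendental_X R).pow (hn i)

theorem SetLike.pow_div_mem_graded {R S : Type*} [SetLike S R] [Monoid R] {𝒜 : ℕ → S}
    [SetLike.GradedMonoid 𝒜] {a : R} {d D : ℕ} (ha : a ∈ 𝒜 d) (hdD : d ∣ D) :
    a ^ (D / d) ∈ 𝒜 D := by
  simpa [Nat.div_mul_cancel hdD] using SetLike.pow_mem_graded (D / d) ha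

section Graded

variable {k A : Type*} [CommRing k] [CommRing A] [Algebra k A] (𝒜 : ℕ → Submodule k A)

def homogeneousOfPosDegree : Set A := {a | ∃ d, 0 < d ∧ a ∈ 𝒜 d}

theorem isIntegral_adjoin_homogeneousOfPosDegree [GradedAlgebra 𝒜]
    (h0 : ∀ x ∈ 𝒜 0, IsIntegral k x) (x : A) :
    IsIntegral (Algebra.adjoin k (homogeneousOfPosDegree 𝒜)) x := by
  induction x using DirectSum.Decomposition.inductionOn 𝒜 with
  | zero => exact isIntegral_zero
  | add a b ha hb => exact ha.add hb
  | @homogeneous d a =>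
    rcases Nat.eq_zero_or_pos d with rfl | hd
    · exact (h0 a a.2).tower_top
    · exact isIntegral_algebraMap (R := Algebra.adjoin k (homogeneousOfPosDegree 𝒜))
        (x := ⟨a, Algebra.subset_adjoin ⟨d, hd, a.2⟩⟩)

end Graded

/-- **Existence of algebraically independent homogeneous elements of a common
positive degree.**

Let `A` be a graded integral domain over a field `k` such that every element of
the degree-zero part is algebraic over `k`.  If `A` contains `r + 1` elements
that are algebraically independent over `k`, then `A` contains `r + 1`
homogeneous elements, all of one and the same positive degree `d`, that are
algebraically independent over `k`. -/
theorem exists_algIndep_homogeneous_same_degree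
    (k A : Type*) [Field k] [CommRing A] [IsDomain A] [Algebra k A]
    (𝒜 : ℕ → Submodule k A) [GradedAlgebra 𝒜] (r : ℕ)
    (h0 : ∀ x ∈ 𝒜 0, IsAlgebraic k x)
    (h : ∃ v : Fin (r + 1) → A, AlgebraicIndependent k v) :
    ∃ d : ℕ, 1 ≤ d ∧ ∃ u : Fin (r + 1) → A,
      (∀ i, u i ∈ 𝒜 d) ∧ AlgebraicIndependent k u := by
  obtain ⟨v, hv⟩ := h
  have : Algebra.IsIntegral (Algebra.adjoin k (homogeneousOfPosDegree 𝒜)) A :=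
    ⟨isIntegral_adjoin_homogeneousOfPosDegree 𝒜 fun x hx => (h0 x hx).isIntegral⟩
  obtain ⟨w, hwS, hw⟩ := hv.exists_algebraicIndependent_forall_mem (homogeneousOfPosDegree 𝒜)
  choose d hd hwd using hwS
  have hD : 0 < ∏ i, d i := Finset.prod_pos fun i _ => hd i
  have hdvd : ∀ i, d i ∣ ∏ j, d j := fun i => Finset.dvd_prod_of_mem d (Finset.mem_univ i)
  refine ⟨∏ i, d i, hD, fun i => w i ^ ((∏ j, d j) / d i),
    fun i => SetLike.pow_div_mem_graded (hwd i) (hdvd i), hw.pow fun i => ?_⟩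
  exact Nat.div_pos (Nat.le_of_dvd hD (hdvd i)) (hd i)
end

section
/- Let k be a field and A a commutative integral domain equipped with an ℕ-grading 𝒜 : ℕ → Submodule k A making A a graded k-algebra. Let x ∈ A, let u : Fin r → A, and suppose the family Fin.cons x u : Fin (r+1) → A is algebraically independent over k. Then there exists d ∈ ℕ such that, denoting by x_d the degree-d homogeneous component of x (the image of x under the degree-d projection of the grading), the family Fin.cons x_d u is algebraically independent over k. In other words, an element that is part of an algebraically independent family can be replaced by one of its homogeneous components while preserving algebraic independence. -/
/-!
Let `S = k[u]`; algebraic independence of `u` makes `S ≅ k[X₁, …, Xᵣ]` a domain, and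
`Fin.cons a u` is algebraically independent exactly when `a` is transcendental over `S`.
Elements algebraic over a domain form a subalgebra, so if every homogeneous component
of `x` were algebraic over `S`, so would be their finite sum `x`.
-/

open Algebra

theorem AlgebraicIndependent.isDomain_adjoin_range {R A ι : Type*} [CommRing R] [IsDomain R]
    [CommRing A] [Algebra R A] {x : ι → A} (hx : AlgebraicIndependent R x) :
    IsDomain (adjoin R (Set.range x)) :=
  hx.aevalEquiv.toMulEquiv.symm.isDomain _

theorem AlgebraicIndependent.finCons_iff_transcendental {R A : Type*} [CommRing R] [CommRing A]
    [Algebra R A] {r : ℕ} {u : Fin r → A} (hu : AlgebraicIndependent R u) (a : A) :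
    AlgebraicIndependent R (Fin.cons a u : Fin (r + 1) → A) ↔
      Transcendental (adjoin R (Set.range u)) a := by
  rw [← hu.option_iff_transcendental,
    algebraicIndependent_equiv' (finSuccEquiv r) (f := fun o ↦ o.elim a u)]
  funext i
  cases i using Fin.cases <;> simp

theorem Transcendental.exists_transcendental_decompose {R A ι σ : Type*} [CommRing R] [IsDomain R] [CommRing A]
    [Algebra R A] [DecidableEq ι] [SetLike σ A] [AddSubmonoidClass σ A] (𝒜 : ι → σ)
    [DirectSum.Decomposition 𝒜] {x : A} (hx : Transcendental R x) :
    ∃ i, Transcendental R (DirectSum.decompose 𝒜 x i : A) := by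
  classical
  by_contra! halg
  rw [← DirectSum.sum_support_decompose 𝒜 x] at hx
  exact hx ((Subalgebra.algebraicClosure R A).sum_mem fun i _ ↦ not_not.mp (halg i))

theorem algIndep_cons_homogeneousComponent_general
    (k A : Type*) [Field k] [CommRing A] [Algebra k A]
    (𝒜 : ℕ → Submodule k A) [GradedAlgebra 𝒜] (r : ℕ)
    (x : A) (u : Fin r → A)
    (h : AlgebraicIndependent k (Fin.cons x u : Fin (r + 1) → A)) :
    ∃ d : ℕ, AlgebraicIndependent k
      (Fin.cons ((DirectSum.decompose 𝒜 x d : 𝒜 d) : A) u : Fin (r + 1) → A) := by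
  have hu : AlgebraicIndependent k u := by simpa using h.comp Fin.succ (Fin.succ_injective r)
  have := hu.isDomain_adjoin_range
  obtain ⟨d, hd⟩ := ((hu.finCons_iff_transcendental x).mp h).exists_transcendental_decompose 𝒜
  exact ⟨d, (hu.finCons_iff_transcendental _).mpr hd⟩

/-- **Replacing a member of an algebraically independent family by one of its
homogeneous components.**

Let `A` be a graded integral domain over a field `k`.  If the family
`Fin.cons x u : Fin (r+1) → A` is algebraically independent over `k`, then for
some degree `d` the family obtained by replacing `x` by its degree-`d`
homogeneous component is still algebraically independent over `k`. -/
theorem algIndep_cons_homogeneousComponent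
    (k A : Type*) [Field k] [CommRing A] [IsDomain A] [Algebra k A]
    (𝒜 : ℕ → Submodule k A) [GradedAlgebra 𝒜] (r : ℕ)
    (x : A) (u : Fin r → A)
    (h : AlgebraicIndependent k (Fin.cons x u : Fin (r + 1) → A)) :
    ∃ d : ℕ, AlgebraicIndependent k
      (Fin.cons ((DirectSum.decompose 𝒜 x d : 𝒜 d) : A) u : Fin (r + 1) → A) :=
  algIndep_cons_homogeneousComponent_general k A 𝒜 r x u h
end
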